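/- arXiv:2004.03999 — 7 statements merged into one kernel-verified Lean document; each statement's English description precedes it below -/
import Mathlib

section
/- For every t ≥ 0 and K ∈ (0,1), t^K = (K/Γ(1-K)) ∫₀^∞ (1 - e^{-t x}) x^{-1-K} dx. -/
/-!
Integrate by parts with `u = 1 - exp (-t x)` and `v = -x ^ (-K) / K`. Since
`0 ≤ u ≤ min (t x) 1`, the boundary term `u v` vanishes at `0` (because `K < 1`) and at `∞`
(because `0 < K`), and what remains is `(t / K) ∫ x ^ (-K) exp (-t x) dx = Γ(1 - K) t ^ K / K`.
-/

open Real Set MeasureTheory Filter Topology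

section
variable {t K : ℝ}

lemma one_sub_exp_neg_nonneg {y : ℝ} (hy : 0 ≤ y) : 0 ≤ 1 - exp (-y) :=
  sub_nonneg.2 (exp_le_one_iff.2 (neg_nonpos.2 hy))

lemma one_sub_exp_neg_le_self (y : ℝ) : 1 - exp (-y) ≤ y := by
  linarith [one_sub_le_exp_neg y]

lemma one_sub_exp_neg_mul_mul_rpow_nonneg (ht : 0 ≤ t) {x : ℝ} (hx : 0 < x) (p : ℝ) :
    0 ≤ (1 - exp (-(t * x))) * x ^ p :=
  mul_nonneg (one_sub_exp_neg_nonneg (by positivity)) (by positivity)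

lemma one_sub_exp_neg_mul_mul_rpow_le {x : ℝ} (hx : 0 < x) (p : ℝ) :
    (1 - exp (-(t * x))) * x ^ p ≤ t * x ^ (p + 1) :=
  calc (1 - exp (-(t * x))) * x ^ p ≤ (t * x) * x ^ p := by
        gcongr
        exact one_sub_exp_neg_le_self _
    _ = t * x ^ (p + 1) := by rw [rpow_add_one hx.ne']; ring

lemma one_sub_exp_neg_mul_mul_rpow_le_rpow {x : ℝ} (hx : 0 < x) (p : ℝ) :
    (1 - exp (-(t * x))) * x ^ p ≤ x ^ p := by
  nlinarith [exp_pos (-(t * x)), rpow_pos_of_pos hx p]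

lemma integrableOn_one_sub_exp_neg_mul_mul_rpow (ht : 0 ≤ t) (hK0 : 0 < K) (hK1 : K < 1) :
    IntegrableOn (fun x => (1 - exp (-(t * x))) * x ^ (-1 - K)) (Ioi 0) := by
  have hcont : ContinuousOn (fun x => (1 - exp (-(t * x))) * x ^ (-1 - K)) (Ioi 0) :=
    fun x hx => ((by fun_prop : Continuous fun x => 1 - exp (-(t * x))).continuousAt.mul
      (continuousAt_rpow_const _ _ (Or.inl (ne_of_gt hx)))).continuousWithinAt
  have hbound : ∀ {s g}, MeasurableSet s → s ⊆ Ioi 0 → IntegrableOn g s →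
      (∀ x ∈ s, (1 - exp (-(t * x))) * x ^ (-1 - K) ≤ g x) →
      IntegrableOn (fun x => (1 - exp (-(t * x))) * x ^ (-1 - K)) s :=
    fun hs hs0 hg hle => hg.mono' ((hcont.mono hs0).aestronglyMeasurable hs) <|
      (ae_restrict_mem hs).mono fun x hx => by
        rw [norm_of_nonneg (one_sub_exp_neg_mul_mul_rpow_nonneg ht (hs0 hx) _)]
        exact hle x hx
  rw [← Ioc_union_Ioi_eq_Ioi zero_le_one]
  refine (hbound (g := fun x => t * x ^ (-K)) measurableSet_Ioc Ioc_subset_Ioi_self ?_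
    fun x hx => ?_).union
    (hbound measurableSet_Ioi (Ioi_subset_Ioi zero_le_one)
      (integrableOn_Ioi_rpow_of_lt (by linarith) one_pos)
      fun x hx => one_sub_exp_neg_mul_mul_rpow_le_rpow (zero_lt_one.trans hx) _)
  · exact ((intervalIntegral.intervalIntegrable_rpow' (r := -K) (by linarith)).1).const_mul t
  · convert one_sub_exp_neg_mul_mul_rpow_le (t := t) hx.1 (-1 - K) using 3
    ring

lemma tendsto_one_sub_exp_neg_mul_mul_rpow_nhdsGT_zero (ht : 0 ≤ t) (hK1 : K < 1) :
    Tendsto (fun x => (1 - exp (-(t * x))) * x ^ (-K)) (𝓝[>] 0) (𝓝 0) := by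
  have hlim : Tendsto (fun x : ℝ => t * x ^ (-K + 1)) (𝓝[>] 0) (𝓝 0) := by
    have := ((continuous_rpow_const (by linarith : 0 ≤ -K + 1)).tendsto 0).const_mul t
    rw [zero_rpow (by linarith), mul_zero] at this
    exact this.mono_left nhdsWithin_le_nhds
  refine tendsto_of_tendsto_of_tendsto_of_le_of_le' tendsto_const_nhds hlim ?_ ?_ <;>
    filter_upwards [self_mem_nhdsWithin] with x hx
  · exact one_sub_exp_neg_mul_mul_rpow_nonneg ht hx _
  · exact one_sub_exp_neg_mul_mul_rpow_le hx _

lemma tendsto_one_sub_exp_neg_mul_mul_rpow_atTop (ht : 0 ≤ t) (hK0 : 0 < K) :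
    Tendsto (fun x => (1 - exp (-(t * x))) * x ^ (-K)) atTop (𝓝 0) := by
  refine tendsto_of_tendsto_of_tendsto_of_le_of_le' tendsto_const_nhds
    (tendsto_rpow_neg_atTop hK0) ?_ ?_ <;> filter_upwards [eventually_gt_atTop 0] with x hx
  · exact one_sub_exp_neg_mul_mul_rpow_nonneg ht hx _
  · exact one_sub_exp_neg_mul_mul_rpow_le_rpow hx _

lemma hasDerivAt_one_sub_exp_neg_mul (x : ℝ) :
    HasDerivAt (fun x => 1 - exp (-(t * x))) (t * exp (-(t * x))) x := by
  simpa [mul_comm] using (((hasDerivAt_id x).const_mul t).neg.exp).const_sub 1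

lemma hasDerivAt_neg_rpow_neg_div {x : ℝ} (hx : 0 < x) (hK : K ≠ 0) :
    HasDerivAt (fun x => -x ^ (-K) / K) (x ^ (-1 - K)) x := by
  refine ((hasDerivAt_rpow_const (Or.inl hx.ne')).fun_neg.div_const K).congr_deriv ?_
  rw [neg_mul, neg_neg, mul_div_cancel_left₀ _ hK, neg_sub_comm]

theorem integral_one_sub_exp_neg_mul_mul_rpow (ht : 0 < t) (hK0 : 0 < K) (hK1 : K < 1) :
    ∫ x in Ioi 0, (1 - exp (-(t * x))) * x ^ (-1 - K) = Gamma (1 - K) * t ^ K / K := by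
  have hboundary : ∀ {l : Filter ℝ},
      Tendsto (fun x => (1 - exp (-(t * x))) * x ^ (-K)) l (𝓝 0) →
      Tendsto (fun x => (1 - exp (-(t * x))) * (-x ^ (-K) / K)) l (𝓝 0) := fun h => by
    have := h.neg.div_const K
    rw [neg_zero, zero_div] at this
    exact this.congr fun x => by ring
  have hGamma : IntegrableOn (fun x => x ^ (-K) * exp (-(t * x))) (Ioi 0) := by
    simpa using integrableOn_rpow_mul_exp_neg_mul_rpow (p := 1) (by linarith) one_pos ht
  have hu'v : IntegrableOn ((fun x => t * exp (-(t * x))) * fun x => -x ^ (-K) / K) (Ioi 0) :=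
    IntegrableOn.congr_fun (hGamma.const_mul (-(t / K)))
      (fun x _ => by simp only [Pi.mul_apply]; ring) measurableSet_Ioi
  have hparts := integral_Ioi_mul_deriv_eq_deriv_mul
    (fun x _ => hasDerivAt_one_sub_exp_neg_mul x)
    (fun x hx => hasDerivAt_neg_rpow_neg_div hx hK0.ne')
    (integrableOn_one_sub_exp_neg_mul_mul_rpow ht.le hK0 hK1) hu'v
    (hboundary (tendsto_one_sub_exp_neg_mul_mul_rpow_nhdsGT_zero ht.le hK1))
    (hboundary (tendsto_one_sub_exp_neg_mul_mul_rpow_atTop ht.le hK0))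
  have hGammaval := integral_rpow_mul_exp_neg_mul_Ioi (a := 1 - K) (by linarith) ht
  rw [sub_sub_cancel_left, one_div, inv_rpow ht.le, ← rpow_neg ht.le, neg_sub,
    rpow_sub_one ht.ne'] at hGammaval
  rw [hparts, show (fun x => t * exp (-(t * x)) * (-x ^ (-K) / K))
      = fun x => -(t / K) * (x ^ (-K) * exp (-(t * x))) from funext fun x => by ring,
    integral_const_mul, hGammaval]
  field_simp
  ring

end

theorem rpow_eq_gamma_integral (K t : ℝ) (hK : K ∈ Set.Ioo (0:ℝ) 1) (ht : 0 ≤ t) :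
    t ^ K = (K / Real.Gamma (1 - K)) *
      ∫ x in Set.Ioi (0:ℝ), (1 - Real.exp (-(t * x))) * x ^ (-1 - K) := by
  obtain ⟨hK0, hK1⟩ := hK
  rcases ht.eq_or_lt with rfl | ht
  · simp [zero_rpow hK0.ne']
  rw [integral_one_sub_exp_neg_mul_mul_rpow ht hK0 hK1]
  have : Gamma (1 - K) ≠ 0 := (Gamma_pos_of_pos (by linarith)).ne'
  field_simp
end

section
/- For every s,t ≥ 0, 2^{-K}|t-s|^{2HK} ≤ E[(B^{H,K}_t - B^{H,K}_s)^2] ≤ 2^{1-K}|t-s|^{2HK}; equivalently, the function (t,s) ↦ R^{H,K}(t,t) + R^{H,K}(s,s) - 2R^{H,K}(t,s) is bounded between 2^{-K}|t-s|^{2HK} and 2^{1-K}|t-s|^{2HK}. -/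
/-!
Put `X = t ^ (2H)`, `Y = s ^ (2H)`, `W = |t - s| ^ (2H)`. The variance of the increment is
`X ^ K + Y ^ K - 2 ((X + Y) / 2) ^ K + 2 (W / 2) ^ K`, so the upper bound is the concavity of
`z ↦ z ^ K`, and the lower bound is the reverse estimate
`2 ((X + Y) / 2) ^ K ≤ X ^ K + Y ^ K + (W / 2) ^ K`.
Since `z ^ K = c ∫₀^∞ (1 - exp (-z l)) l ^ (-1 - K) dl` with `c > 0`, it suffices to prove that
estimate for `z ↦ 1 - exp (-z l)`, where it reads
`(exp (-l X / 2) - exp (-l Y / 2)) ^ 2 ≤ 1 - exp (-l W / 2)`.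
As `|√X - √Y| = |t ^ H - s ^ H| ≤ √W`, this follows from
`(exp (-x²) - exp (-y²)) ^ 2 ≤ (1 - exp (-(x + y)²)) (1 - exp (-(x - y)²))`, the Cauchy–Schwarz
inequality for `E[sin ((x + y) ξ) sin ((x - y) ξ)]` with `ξ` a centred Gaussian.
-/

open Real Set

/-- Covariance of the bifractional Brownian motion. -/
noncomputable def Rbf (H K t s : ℝ) : ℝ :=
  2 ^ (-K) * ((t ^ (2 * H) + s ^ (2 * H)) ^ K - |t - s| ^ (2 * H * K))

open MeasureTheory ProbabilityTheory

theorem sq_integral_mul_le_integral_sq_mul_integral_sq {α : Type*} [MeasurableSpace α]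
    {μ : Measure α} {f g : α → ℝ} (hf : Integrable (fun a ↦ f a ^ 2) μ)
    (hg : Integrable (fun a ↦ g a ^ 2) μ) (hfg : Integrable (fun a ↦ f a * g a) μ) :
    (∫ a, f a * g a ∂μ) ^ 2 ≤ (∫ a, f a ^ 2 ∂μ) * ∫ a, g a ^ 2 ∂μ := by
  have hquad : ∀ r : ℝ, 0 ≤ (∫ a, g a ^ 2 ∂μ) * (r * r) + (-2 * ∫ a, f a * g a ∂μ) * r
      + ∫ a, f a ^ 2 ∂μ := by
    intro r
    have hexp : ∀ a, (r * g a - f a) ^ 2 = r * r * g a ^ 2 + -2 * r * (f a * g a) + f a ^ 2 :=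
      fun a ↦ by ring
    have : 0 ≤ ∫ a, (r * g a - f a) ^ 2 ∂μ := integral_nonneg fun a ↦ sq_nonneg _
    simp only [hexp] at this
    rw [integral_add (by fun_prop) hf, integral_add (by fun_prop) (by fun_prop),
      integral_const_mul, integral_const_mul] at this
    linarith
  have := discrim_le_zero hquad
  rw [discrim] at this
  nlinarith

theorem integral_cos_mul_gaussianReal (v : NNReal) (t : ℝ) :
    ∫ x, cos (t * x) ∂gaussianReal 0 v = exp (-(v * t ^ 2 / 2)) := by
  have h := congrArg Complex.re (charFun_gaussianReal (μ := 0) (v := v) t)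
  rw [charFun_apply_real, ← RCLike.re_eq_complex_re, ← integral_re] at h
  · simp only [Complex.ofReal_zero, mul_zero, zero_mul, zero_sub] at h
    have hexp : Complex.exp (-(v * t ^ 2 / 2)) = (exp (-(v * t ^ 2 / 2)) : ℝ) := by push_cast; rfl
    simpa only [RCLike.re_eq_complex_re, ← Complex.ofReal_mul, Complex.exp_ofReal_mul_I_re,
      hexp, Complex.ofReal_re] using h
  · exact .of_bound (by fun_prop) 1 (.of_forall fun x ↦ by
      simp [← Complex.ofReal_mul, Complex.norm_exp_ofReal_mul_I])

theorem integrable_sin_mul_sin (μ : Measure ℝ) [IsFiniteMeasure μ] (p q : ℝ) :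
    Integrable (fun x ↦ sin (p * x) * sin (q * x)) μ :=
  .of_bound (by fun_prop) 1 (.of_forall fun x ↦ by
    simpa [abs_mul] using mul_le_one₀ (abs_sin_le_one _) (abs_nonneg _) (abs_sin_le_one _))

theorem integral_sin_mul_sin_gaussianReal (v : NNReal) (p q : ℝ) :
    ∫ x, sin (p * x) * sin (q * x) ∂gaussianReal 0 v
      = (exp (-(v * (p - q) ^ 2 / 2)) - exp (-(v * (p + q) ^ 2 / 2))) / 2 := by
  have hprod : ∀ x, sin (p * x) * sin (q * x) = (cos ((p - q) * x) - cos ((p + q) * x)) / 2 := by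
    intro x
    rw [sub_mul, add_mul, cos_sub, cos_add]
    ring
  have hcos : ∀ t, Integrable (fun x ↦ cos (t * x)) (gaussianReal 0 v) := fun t ↦
    .of_bound (by fun_prop) 1 (.of_forall fun x ↦ by simpa using abs_cos_le_one _)
  simp only [hprod]
  rw [integral_div, integral_sub (hcos _) (hcos _), integral_cos_mul_gaussianReal,
    integral_cos_mul_gaussianReal]

theorem sq_exp_neg_mul_sq_sub_le {c : ℝ} (hc : 0 ≤ c) (x y : ℝ) :
    (exp (-(c * x ^ 2)) - exp (-(c * y ^ 2))) ^ 2
      ≤ (1 - exp (-(c * (x + y) ^ 2))) * (1 - exp (-(c * (x - y) ^ 2))) := by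
  obtain ⟨v, hv⟩ : ∃ v : NNReal, (v : ℝ) = c / 2 := ⟨_, Real.coe_toNNReal _ (by positivity)⟩
  have hsq : ∀ p : ℝ, ∫ ξ, sin (p * ξ) ^ 2 ∂gaussianReal 0 v = (1 - exp (-(c * p ^ 2))) / 2 := by
    intro p
    simp only [sq, integral_sin_mul_sin_gaussianReal, hv, sub_self, mul_zero, zero_div, neg_zero,
      exp_zero]
    ring_nf
  have hcs := sq_integral_mul_le_integral_sq_mul_integral_sq
    (by simpa only [sq] using integrable_sin_mul_sin (gaussianReal 0 v) (x + y) (x + y))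
    (by simpa only [sq] using integrable_sin_mul_sin (gaussianReal 0 v) (x - y) (x - y))
    (integrable_sin_mul_sin _ (x + y) (x - y))
  rw [hsq, hsq, integral_sin_mul_sin_gaussianReal, hv] at hcs
  have hy : c / 2 * (x + y - (x - y)) ^ 2 / 2 = c * y ^ 2 := by ring
  have hx : c / 2 * (x + y + (x - y)) ^ 2 / 2 = c * x ^ 2 := by ring
  rw [hy, hx] at hcs
  linarith

theorem one_sub_exp_neg_nonneg_s1 {x : ℝ} (hx : 0 ≤ x) : 0 ≤ 1 - exp (-x) := by
  linarith [exp_le_one_iff.mpr (neg_nonpos.mpr hx)]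

section Bernstein

variable {K : ℝ}

theorem integrableOn_one_sub_exp_neg_mul_rpow (hK0 : 0 < K) (hK1 : K < 1) {z : ℝ} (hz : 0 ≤ z) :
    IntegrableOn (fun l ↦ (1 - exp (-(z * l))) * l ^ (-1 - K)) (Ioi 0) := by
  have hmeas : AEStronglyMeasurable (fun l : ℝ ↦ (1 - exp (-(z * l))) * l ^ (-1 - K)) :=
    (by fun_prop : Measurable _).aestronglyMeasurable
  rw [← Ioc_union_Ioi_eq_Ioi zero_le_one]
  refine IntegrableOn.union ?_ ?_
  · have hdom : IntegrableOn (fun l : ℝ ↦ z * l ^ (-K)) (Ioc 0 1) := by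
      refine Integrable.const_mul ?_ z
      have := intervalIntegral.intervalIntegrable_rpow' (a := 0) (b := 1)
        (show (-1 : ℝ) < -K by linarith)
      rwa [intervalIntegrable_iff, uIoc_of_le zero_le_one] at this
    refine hdom.mono' hmeas.restrict ((ae_restrict_mem measurableSet_Ioc).mono fun l hl ↦ ?_)
    have hl0 : 0 < l := hl.1
    rw [norm_mul, Real.norm_of_nonneg (one_sub_exp_neg_nonneg_s1 (by positivity)),
      Real.norm_of_nonneg (by positivity)]
    calc (1 - exp (-(z * l))) * l ^ (-1 - K) ≤ z * l * l ^ (-1 - K) := by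
          gcongr; linarith [add_one_le_exp (-(z * l))]
      _ = z * l ^ (-K) := by
          rw [mul_assoc, ← rpow_one_add' hl0.le (by linarith)]; ring_nf
  · refine (integrableOn_Ioi_rpow_of_lt (show -1 - K < -1 by linarith) one_pos).mono' hmeas.restrict
      ((ae_restrict_mem measurableSet_Ioi).mono fun l hl ↦ ?_)
    have hl0 : (0 : ℝ) < l := one_pos.trans hl
    rw [norm_mul, Real.norm_of_nonneg (one_sub_exp_neg_nonneg_s1 (by positivity)),
      Real.norm_of_nonneg (by positivity)]
    exact mul_le_of_le_one_left (by positivity) (by linarith [exp_pos (-(z * l))])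

theorem integral_one_sub_exp_neg_mul_rpow (hK0 : 0 < K) {z : ℝ} (hz : 0 ≤ z) :
    ∫ l in Ioi 0, (1 - exp (-(z * l))) * l ^ (-1 - K)
      = z ^ K * ∫ l in Ioi 0, (1 - exp (-l)) * l ^ (-1 - K) := by
  rcases hz.eq_or_lt with rfl | hz
  · simp [zero_rpow hK0.ne']
  have hscale : EqOn (fun l ↦ (1 - exp (-(z * l))) * l ^ (-1 - K))
      (fun l ↦ z ^ (1 + K) * ((1 - exp (-(z * l))) * (z * l) ^ (-1 - K))) (Ioi 0) := by
    intro l (hl : 0 < l)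
    dsimp only
    rw [mul_rpow hz.le hl.le, mul_left_comm, ← mul_assoc (z ^ (1 + K)), ← rpow_add hz]
    norm_num
  rw [setIntegral_congr_fun measurableSet_Ioi hscale, integral_const_mul,
    integral_comp_mul_left_Ioi (fun u ↦ (1 - exp (-u)) * u ^ (-1 - K)) 0 hz, mul_zero, smul_eq_mul,
    ← mul_assoc, ← rpow_neg_one, ← rpow_add hz]
  norm_num

theorem integral_one_sub_exp_neg_mul_rpow_pos (hK0 : 0 < K) (hK1 : K < 1) :
    0 < ∫ l in Ioi 0, (1 - exp (-l)) * l ^ (-1 - K) := by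
  have hpos : ∀ l ∈ Ioi (0 : ℝ), 0 < (1 - exp (-l)) * l ^ (-1 - K) := fun l (hl : 0 < l) ↦
    mul_pos (by linarith [exp_lt_one_iff.mpr (neg_lt_zero.mpr hl)]) (rpow_pos_of_pos hl _)
  rw [setIntegral_pos_iff_support_of_nonneg_ae
    ((ae_restrict_mem measurableSet_Ioi).mono fun l hl ↦ (hpos l hl).le)
    (by simpa using integrableOn_one_sub_exp_neg_mul_rpow hK0 hK1 zero_le_one)]
  exact (by simp : (0 : ENNReal) < volume (Ioi (0 : ℝ))).trans_le
    (measure_mono fun l hl ↦ ⟨(hpos l hl).ne', hl⟩)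

theorem sum_mul_rpow_nonneg {ι : Type*} (s : Finset ι) (c z : ι → ℝ) (hK0 : 0 < K) (hK1 : K < 1)
    (hz : ∀ i ∈ s, 0 ≤ z i) (h : ∀ l, 0 < l → 0 ≤ ∑ i ∈ s, c i * (1 - exp (-(z i * l)))) :
    0 ≤ ∑ i ∈ s, c i * z i ^ K := by
  have hint : 0 ≤ ∫ l in Ioi 0, ∑ i ∈ s, c i * ((1 - exp (-(z i * l))) * l ^ (-1 - K)) := by
    refine setIntegral_nonneg measurableSet_Ioi fun l (hl : 0 < l) ↦ ?_
    simp only [← mul_assoc, ← Finset.sum_mul]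
    exact mul_nonneg (h l hl) (rpow_nonneg hl.le _)
  rw [integral_finsetSum _ fun i hi ↦
    (integrableOn_one_sub_exp_neg_mul_rpow hK0 hK1 (hz i hi)).const_mul (c i)] at hint
  simp only [integral_const_mul] at hint
  rw [Finset.sum_congr rfl fun i hi ↦ by rw [integral_one_sub_exp_neg_mul_rpow hK0 (hz i hi)]]
    at hint
  simp only [← mul_assoc, ← Finset.sum_mul] at hint
  exact nonneg_of_mul_nonneg_left hint (integral_one_sub_exp_neg_mul_rpow_pos hK0 hK1)

end Bernstein

theorem two_rpow_neg_mul_rpow {A : ℝ} (hA : 0 ≤ A) (K : ℝ) : 2 ^ (-K) * A ^ K = (A / 2) ^ K := by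
  rw [div_rpow hA zero_le_two, rpow_neg zero_le_two, div_eq_inv_mul]

theorem abs_rpow_sub_rpow_le {p s t : ℝ} (hp0 : 0 ≤ p) (hp1 : p ≤ 1) (hs : 0 ≤ s) (ht : 0 ≤ t) :
    |t ^ p - s ^ p| ≤ |t - s| ^ p := by
  wlog hst : s ≤ t generalizing s t
  · rw [abs_sub_comm, abs_sub_comm t]
    exact this ht hs (le_of_not_ge hst)
  have hmono : s ^ p ≤ t ^ p := rpow_le_rpow hs hst hp0
  have hsub : t ^ p ≤ s ^ p + (t - s) ^ p := by
    simpa using rpow_add_le_add_rpow hs (sub_nonneg.mpr hst) hp0 hp1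
  rw [abs_of_nonneg (sub_nonneg.mpr hmono), abs_of_nonneg (sub_nonneg.mpr hst)]
  linarith

theorem add_rpow_le_two_mul_rpow_midpoint {K X Y : ℝ} (hK0 : 0 ≤ K) (hK1 : K ≤ 1)
    (hX : 0 ≤ X) (hY : 0 ≤ Y) : X ^ K + Y ^ K ≤ 2 * ((X + Y) / 2) ^ K := by
  have := (concaveOn_rpow hK0 hK1).2 (mem_Ici.mpr hX) (mem_Ici.mpr hY)
    (by norm_num : (0 : ℝ) ≤ 1 / 2) (by norm_num : (0 : ℝ) ≤ 1 / 2) (by norm_num)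
  simp only [smul_eq_mul] at this
  rw [show 1 / 2 * X + 1 / 2 * Y = (X + Y) / 2 by ring] at this
  linarith

theorem two_mul_one_sub_exp_neg_midpoint_le {x y w l : ℝ} (hxyw : |x - y| ≤ w) (hl : 0 ≤ l) :
    2 * (1 - exp (-((x ^ 2 + y ^ 2) / 2 * l)))
      ≤ (1 - exp (-(x ^ 2 * l))) + (1 - exp (-(y ^ 2 * l))) + (1 - exp (-(w ^ 2 / 2 * l))) := by
  have hdist : (x - y) ^ 2 ≤ w ^ 2 := by
    simpa only [sq_abs] using pow_le_pow_left₀ (abs_nonneg _) hxyw 2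
  have hkernel := sq_exp_neg_mul_sq_sub_le (c := l / 2) (by positivity) x y
  have hfar : exp (-(w ^ 2 / 2 * l)) ≤ exp (-(l / 2 * (x - y) ^ 2)) :=
    exp_le_exp.mpr (by nlinarith)
  have hdrop : (1 - exp (-(l / 2 * (x + y) ^ 2))) * (1 - exp (-(l / 2 * (x - y) ^ 2)))
      ≤ 1 - exp (-(l / 2 * (x - y) ^ 2)) :=
    mul_le_of_le_one_left (one_sub_exp_neg_nonneg_s1 (by positivity))
      (by linarith [exp_pos (-(l / 2 * (x + y) ^ 2))])
  have hX : exp (-(x ^ 2 * l)) = exp (-(l / 2 * x ^ 2)) ^ 2 := by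
    rw [← exp_nat_mul]; ring_nf
  have hY : exp (-(y ^ 2 * l)) = exp (-(l / 2 * y ^ 2)) ^ 2 := by
    rw [← exp_nat_mul]; ring_nf
  have hXY : exp (-((x ^ 2 + y ^ 2) / 2 * l))
      = exp (-(l / 2 * x ^ 2)) * exp (-(l / 2 * y ^ 2)) := by
    rw [← exp_add]; ring_nf
  rw [hX, hY, hXY]
  linarith

theorem two_mul_rpow_midpoint_sq_le {K x y w : ℝ} (hK0 : 0 < K) (hK1 : K ≤ 1)
    (hxyw : |x - y| ≤ w) :
    2 * ((x ^ 2 + y ^ 2) / 2) ^ K ≤ (x ^ 2) ^ K + (y ^ 2) ^ K + (w ^ 2 / 2) ^ K := by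
  rcases hK1.eq_or_lt with rfl | hK1
  · simp only [rpow_one]
    nlinarith [sq_nonneg w]
  have := sum_mul_rpow_nonneg Finset.univ ![1, 1, 1, -2]
    ![x ^ 2, y ^ 2, w ^ 2 / 2, (x ^ 2 + y ^ 2) / 2] hK0 hK1
    (fun i _ ↦ by fin_cases i <;> dsimp <;> positivity)
    (fun l hl ↦ by
      simp only [Fin.sum_univ_four, Matrix.cons_val_zero, Matrix.cons_val_one, Matrix.cons_val]
      linarith [two_mul_one_sub_exp_neg_midpoint_le hxyw hl.le])
  simp only [Fin.sum_univ_four, Matrix.cons_val_zero, Matrix.cons_val_one, Matrix.cons_val] at this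
  linarith

theorem Rbf_self {H K t : ℝ} (hH : H ≠ 0) (hK : K ≠ 0) (ht : 0 ≤ t) :
    Rbf H K t t = (t ^ (2 * H)) ^ K := by
  rw [Rbf, sub_self, abs_zero, zero_rpow (by positivity), sub_zero, ← two_mul,
    two_rpow_neg_mul_rpow (by positivity), mul_div_cancel_left₀ _ two_ne_zero]

theorem Rbf_increment {H K s t : ℝ} (hH : H ≠ 0) (hK : K ≠ 0) (hs : 0 ≤ s) (ht : 0 ≤ t) :
    Rbf H K t t + Rbf H K s s - 2 * Rbf H K t s
      = (t ^ (2 * H)) ^ K + (s ^ (2 * H)) ^ K - 2 * ((t ^ (2 * H) + s ^ (2 * H)) / 2) ^ K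
        + 2 * (|t - s| ^ (2 * H) / 2) ^ K := by
  rw [Rbf_self hH hK ht, Rbf_self hH hK hs, Rbf, mul_sub,
    two_rpow_neg_mul_rpow (by positivity), rpow_mul (abs_nonneg _),
    two_rpow_neg_mul_rpow (by positivity)]
  ring

theorem bfBm_quasi_helix (H K : ℝ) (hH : H ∈ Set.Ioo (0:ℝ) 1) (hK : K ∈ Set.Ioc (0:ℝ) 1)
    (s t : ℝ) (hs : 0 ≤ s) (ht : 0 ≤ t) :
    2 ^ (-K) * |t - s| ^ (2 * H * K) ≤ Rbf H K t t + Rbf H K s s - 2 * Rbf H K t s ∧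
    Rbf H K t t + Rbf H K s s - 2 * Rbf H K t s ≤ 2 ^ (1 - K) * |t - s| ^ (2 * H * K) := by
  obtain ⟨hH0, hH1⟩ := hH
  obtain ⟨hK0, hK1⟩ := hK
  have hsq : ∀ u : ℝ, 0 ≤ u → u ^ (2 * H) = (u ^ H) ^ 2 := fun u hu ↦ by
    rw [mul_comm, rpow_mul hu, rpow_two]
  have hdist : |t ^ H - s ^ H| ≤ |t - s| ^ H := abs_rpow_sub_rpow_le hH0.le hH1.le hs ht
  have hlower := two_mul_rpow_midpoint_sq_le hK0 hK1 hdist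
  have hupper :=
    add_rpow_le_two_mul_rpow_midpoint hK0.le hK1 (sq_nonneg (t ^ H)) (sq_nonneg (s ^ H))
  have hW : 2 ^ (-K) * |t - s| ^ (2 * H * K) = (|t - s| ^ (2 * H) / 2) ^ K := by
    rw [rpow_mul (abs_nonneg _), two_rpow_neg_mul_rpow (by positivity)]
  have hW' : 2 ^ (1 - K) * |t - s| ^ (2 * H * K) = 2 * (|t - s| ^ (2 * H) / 2) ^ K := by
    rw [← hW, sub_eq_add_neg, rpow_add two_pos, rpow_one, mul_assoc]
  rw [Rbf_increment hH0.ne' hK0.ne' hs ht, hW, hW', hsq t ht, hsq s hs, hsq _ (abs_nonneg _)]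
  constructor <;> linarith
end

section
/- For every t > 0, lim_{ε→0} E[(B^{H,K}_{t+ε} - B^{H,K}_t)^2] / ε^{2HK} = 2^{1-K}. Equivalently, with σ²_ε(t) = R^{H,K}(t+ε,t+ε) + R^{H,K}(t,t) - 2R^{H,K}(t+ε,t), one has σ²_ε(t)/ε^{2HK} → 2^{1-K} as ε → 0⁺. -/
open Real Set Filter Topology

theorem bfBm_small_increments (H K : ℝ) (hH : H ∈ Set.Ioo (0:ℝ) 1)
    (hK : K ∈ Set.Ioc (0:ℝ) 1) (t : ℝ) (ht : 0 < t) :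
    Tendsto (fun ε : ℝ =>
        (Rbf H K (t + ε) (t + ε) + Rbf H K t t - 2 * Rbf H K (t + ε) t) / ε ^ (2 * H * K))
      (nhdsWithin 0 (Set.Ioi 0)) (nhds (2 ^ (1 - K))) := by
  obtain ⟨hH0, hH1⟩ := hH
  obtain ⟨hK0, hK1⟩ := hK
  have hc0 : (0:ℝ) < 2 * H * K := by positivity
  have hcne : 2 * H * K ≠ 0 := ne_of_gt hc0
  have h2 : (0:ℝ) < 2 := two_pos
  set A : ℝ := 2 ^ (1 - K) with hA
  set g : ℝ → ℝ := fun x => (t + x) ^ (2*H*K) + t ^ (2*H*K)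
      - A * ((t + x) ^ (2*H) + t ^ (2*H)) ^ K with hg
  set G : ℝ → ℝ := fun x => 1 * (2*H*K) * (t+x) ^ (2*H*K-1)
      - A * ((1 * (2*H) * (t+x) ^ (2*H-1)) * K * ((t+x) ^ (2*H) + t ^ (2*H)) ^ (K-1)) with hG
  -- basic rpow facts
  have hA2 : A * 2 ^ K = 2 := by
    rw [hA, ← Real.rpow_add h2]
    norm_num
  have hA2' : A * 2 ^ (K - 1) = 1 := by
    rw [hA, ← Real.rpow_add h2]
    norm_num
  -- derivative of g
  have hderiv : ∀ x : ℝ, 0 < t + x → HasDerivAt g (G x) x := by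
    intro x hx
    have h1 : HasDerivAt (fun y : ℝ => t + y) 1 x := (hasDerivAt_id x).const_add t
    have hne : t + x ≠ 0 := ne_of_gt hx
    have hinner : (t+x) ^ (2*H) + t ^ (2*H) ≠ 0 := by positivity
    exact ((h1.rpow_const (Or.inl hne)).add_const _).sub
      ((((h1.rpow_const (Or.inl hne)).add_const (t ^ (2*H))).rpow_const
        (Or.inl hinner)).const_mul _)
  -- g 0 = 0
  have hg0 : g 0 = 0 := by
    have e1 : (t + 0) = t := add_zero t
    rw [hg]
    simp only [e1]
    have e2 : t ^ (2*H) + t ^ (2*H) = 2 * t ^ (2*H) := by ring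
    rw [e2, Real.mul_rpow h2.le (Real.rpow_nonneg ht.le _), ← Real.rpow_mul ht.le]
    linear_combination (-(t ^ (2*H*K))) * hA2
  -- G 0 = 0
  have hG0 : G 0 = 0 := by
    have e1 : (t + 0) = t := add_zero t
    rw [hG]
    simp only [e1]
    have e2 : t ^ (2*H) + t ^ (2*H) = 2 * t ^ (2*H) := by ring
    rw [e2, Real.mul_rpow h2.le (Real.rpow_nonneg ht.le _), ← Real.rpow_mul ht.le]
    have e3 : t ^ (2*H-1) * t ^ (2*H*(K-1)) = t ^ (2*H*K-1) := by
      rw [← Real.rpow_add ht]; congr 1; ring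
    calc 1 * (2*H*K) * t ^ (2*H*K-1)
        - A * (1 * (2*H) * t ^ (2*H-1) * K * (2 ^ (K-1) * t ^ (2*H*(K-1))))
        = (2*H*K) * t ^ (2*H*K-1)
          - (A * 2 ^ (K-1)) * ((2*H) * K * (t ^ (2*H-1) * t ^ (2*H*(K-1)))) := by ring
      _ = 0 := by rw [hA2', e3]; ring
  -- G differentiable at 0, with some derivative L2
  have hGd : DifferentiableAt ℝ G 0 := by
    have h1 : HasDerivAt (fun y : ℝ => t + y) 1 0 := (hasDerivAt_id 0).const_add t
    have hne : t + 0 ≠ 0 := by positivity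
    have hinner : (t+0) ^ (2*H) + t ^ (2*H) ≠ 0 := by positivity
    exact (((h1.rpow_const (Or.inl hne)).const_mul _).sub
      (((((h1.rpow_const (Or.inl hne)).const_mul _).mul_const K).mul
        (((h1.rpow_const (Or.inl hne)).add_const (t ^ (2*H))).rpow_const
          (Or.inl hinner))).const_mul A)).differentiableAt
  set L2 : ℝ := deriv G 0 with hL2
  have hGdd : HasDerivAt G L2 0 := hGd.hasDerivAt
  -- slope limit: G x / x → L2 on 𝓝[>] 0
  have hslope : Tendsto (fun x => G x / x) (𝓝[>] (0:ℝ)) (𝓝 L2) := by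
    have := hasDerivAt_iff_tendsto_slope.mp hGdd
    have h := this.mono_left (nhdsWithin_mono 0 (fun x hx => ne_of_gt hx : Ioi (0:ℝ) ⊆ {0}ᶜ))
    refine h.congr (fun x => ?_)
    rw [slope_def_field, hG0]
    ring_nf
  -- l'Hopital: g x / x^2 → L2 / 2
  have hlh : Tendsto (fun x => g x / x ^ 2) (𝓝[>] (0:ℝ)) (𝓝 (L2 / 2)) := by
    apply HasDerivAt.lhopital_zero_right_on_Ioo (f' := G) (g' := fun x => (2:ℕ) * x ^ 1) ht
    · exact fun x hx => hderiv x (by linarith [hx.1])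
    · exact fun x hx => hasDerivAt_pow 2 x
    · intro x hx
      have := hx.1
      simp only [pow_one]
      positivity
    · have hc : ContinuousAt g 0 := (hderiv 0 (by simpa using ht)).continuousAt
      have h := tendsto_nhdsWithin_of_tendsto_nhds (s := Ioi (0:ℝ)) hc.tendsto
      rwa [hg0] at h
    · have : Tendsto (fun x : ℝ => x ^ 2) (𝓝[>] (0:ℝ)) (𝓝 ((0:ℝ) ^ 2)) :=
        (continuous_pow 2).continuousAt.continuousWithinAt.tendsto
      simpa using this
    · have := hslope.div_const 2
      refine this.congr (fun x => ?_)
      push_cast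
      rw [pow_one, div_div, mul_comm]
  -- x ^ (2 - 2HK) → 0
  have hpow : Tendsto (fun x : ℝ => x ^ (2 - 2*H*K)) (𝓝[>] (0:ℝ)) (𝓝 0) := by
    have hex : (0:ℝ) < 2 - 2*H*K := by nlinarith
    have : ContinuousAt (fun x : ℝ => x ^ (2 - 2*H*K)) 0 :=
      Real.continuousAt_rpow_const 0 _ (Or.inr hex.le)
    have h := tendsto_nhdsWithin_of_tendsto_nhds (s := Ioi (0:ℝ)) this.tendsto
    rwa [Real.zero_rpow (ne_of_gt hex)] at h
  -- g x / x^(2HK) → 0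
  have hmain : Tendsto (fun x => g x / x ^ (2*H*K)) (𝓝[>] (0:ℝ)) (𝓝 0) := by
    have h := hlh.mul hpow
    rw [mul_zero] at h
    refine h.congr' (eventually_nhdsWithin_of_forall (fun x hx => ?_))
    have hx : (0:ℝ) < x := hx
    have hx2 : (x:ℝ) ^ 2 ≠ 0 := by positivity
    have hxr : x ^ (2*H*K) ≠ 0 := by positivity
    rw [show (2:ℝ) - 2*H*K = 2 + -(2*H*K) by ring, Real.rpow_add hx, Real.rpow_neg hx.le,
      show ((2:ℝ)) = ((2:ℕ):ℝ) by norm_num, Real.rpow_natCast]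
    field_simp
  -- rewrite statement function
  have heq : ∀ x : ℝ, 0 < x →
      (Rbf H K (t + x) (t + x) + Rbf H K t t - 2 * Rbf H K (t + x) t) / x ^ (2*H*K)
        = g x / x ^ (2*H*K) + A := by
    intro x hx
    have htx : (0:ℝ) < t + x := by linarith
    have hxr : x ^ (2*H*K) ≠ 0 := by positivity
    have r1 : Rbf H K (t + x) (t + x) = (t + x) ^ (2*H*K) := by
      rw [Rbf, sub_self, abs_zero, Real.zero_rpow hcne,
        show (t+x) ^ (2*H) + (t+x) ^ (2*H) = 2 * (t+x) ^ (2*H) by ring,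
        Real.mul_rpow h2.le (Real.rpow_nonneg htx.le _), ← Real.rpow_mul htx.le]
      rw [sub_zero, ← mul_assoc, ← Real.rpow_add h2]
      norm_num
    have r2 : Rbf H K t t = t ^ (2*H*K) := by
      rw [Rbf, sub_self, abs_zero, Real.zero_rpow hcne,
        show t ^ (2*H) + t ^ (2*H) = 2 * t ^ (2*H) by ring,
        Real.mul_rpow h2.le (Real.rpow_nonneg ht.le _), ← Real.rpow_mul ht.le]
      rw [sub_zero, ← mul_assoc, ← Real.rpow_add h2]
      norm_num
    have r3 : 2 * Rbf H K (t + x) t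
        = A * (((t+x) ^ (2*H) + t ^ (2*H)) ^ K - x ^ (2*H*K)) := by
      rw [Rbf, show t + x - t = x by ring, abs_of_pos hx, ← mul_assoc]
      congr 1
      rw [hA, show (1:ℝ) - K = 1 + -K by ring, Real.rpow_add h2, Real.rpow_one]
    rw [r1, r2, r3, hg]
    field_simp
    ring
  have hfinal := hmain.add_const A
  rw [zero_add] at hfinal
  exact Tendsto.congr' (eventually_nhdsWithin_of_forall (fun x hx => (heq x hx).symm)) hfinal
end

section
/- Let 0 < α ≤ γ < 1 and [a,b] ⊂ (0,∞). There is a finite constant C₁(α,γ) such that for all H, H' ∈ [α,γ] and all t ∈ [a,b], ∫₀^∞ (1-cos(tθ)) (θ^{-H-1/2} - θ^{-H'-1/2})² dθ ≤ C₁(α,γ)|H-H'|², i.e., E[(B^H_t - B^{H'}_t)²] ≤ C₁(α,γ)|H-H'|² for fractional Brownian motions defined through their common harmonisable representation. -/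
open Real Set MeasureTheory

/-!
By the mean value theorem for `x ↦ θ ^ x`, `|θ^(-H-1/2) - θ^(-H'-1/2)|` is at most
`|H - H'| |log θ| θ^(-K-1/2)`, with `K = γ` for `θ ≤ 1` and `K = α` for `θ ≥ 1`. Together with
`1 - cos (tθ) ≤ (bθ)²/2` near `0` and `≤ 2` near `∞`, the integrand is bounded by `|H - H'|²` times
a majorant independent of `H, H', t`, which behaves like `θ^(1-2γ) log² θ` at `0` and like
`θ^(-1-2α) log² θ` at `∞`; it is integrable because `γ < 1` and `0 < α`.
-/

lemma abs_exp_sub_exp_le (u v : ℝ) : |exp u - exp v| ≤ max (exp u) (exp v) * |u - v| := by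
  wlog h : v ≤ u generalizing u v
  · rw [abs_sub_comm, abs_sub_comm u, max_comm]
    exact this v u (le_of_not_ge h)
  have hexp : exp (v - u) * exp u = exp v := by rw [← exp_add, sub_add_cancel]
  rw [max_eq_left (exp_le_exp.2 h), abs_of_nonneg (sub_nonneg.2 (exp_le_exp.2 h)),
    abs_of_nonneg (sub_nonneg.2 h)]
  nlinarith [add_one_le_exp (v - u), exp_pos u]

lemma abs_rpow_sub_rpow_le_s7 {θ x y M : ℝ} (hθ : 0 < θ) (hx : θ ^ x ≤ M) (hy : θ ^ y ≤ M) :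
    |θ ^ x - θ ^ y| ≤ M * |log θ| * |x - y| := by
  simp only [rpow_def_of_pos hθ] at hx hy ⊢
  rw [mul_assoc, ← abs_mul, mul_sub]
  exact (abs_exp_sub_exp_le _ _).trans (by gcongr; exact max_le hx hy)

lemma abs_log_pow_le_of_le_one {θ δ : ℝ} (hθ : 0 < θ) (hθ1 : θ ≤ 1) (hδ : 0 < δ) (n : ℕ) :
    |log θ| ^ n ≤ (δ ^ n)⁻¹ * θ ^ (-δ * n) := by
  have hlog : |log θ| ≤ θ ^ (-δ) / δ := by
    have := abs_log_mul_self_rpow_lt θ δ hθ hθ1 hδ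
    rw [abs_mul, abs_of_pos (rpow_pos_of_pos hθ δ), lt_div_iff₀ hδ] at this
    rw [rpow_neg hθ.le, ← one_div, div_div, le_div_iff₀ (by positivity), ← mul_assoc]
    exact this.le
  calc |log θ| ^ n ≤ (θ ^ (-δ) / δ) ^ n := by gcongr
    _ = (δ ^ n)⁻¹ * θ ^ (-δ * n) := by rw [rpow_mul_natCast hθ.le, div_pow, div_eq_inv_mul]

lemma abs_log_pow_le_of_one_le {θ δ : ℝ} (hθ : 1 ≤ θ) (hδ : 0 < δ) (n : ℕ) :
    |log θ| ^ n ≤ (δ ^ n)⁻¹ * θ ^ (δ * n) := by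
  calc |log θ| ^ n ≤ (θ ^ δ / δ) ^ n := by
        gcongr
        rw [abs_of_nonneg (log_nonneg hθ)]
        exact log_le_rpow_div (by linarith) hδ
    _ = (δ ^ n)⁻¹ * θ ^ (δ * n) := by
        rw [rpow_mul_natCast (by linarith), div_pow, div_eq_inv_mul]

lemma integrableOn_rpow_mul_log_pow_Ioc {s : ℝ} (hs : -1 < s) (n : ℕ) :
    IntegrableOn (fun θ ↦ θ ^ s * log θ ^ n) (Ioc 0 1) := by
  set δ := (s + 1) / (2 * (n + 1)) with hδ_def
  have hδ : 0 < δ := div_pos (by linarith) (by positivity)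
  have hexp : -1 < s + -δ * n := by
    have : δ * n ≤ (s + 1) / 2 := by
      rw [hδ_def, div_mul_eq_mul_div, div_le_div_iff₀ (by positivity) two_pos]; nlinarith
    linarith
  have hmaj : IntegrableOn (fun θ ↦ (δ ^ n)⁻¹ * θ ^ (s + -δ * n)) (Ioc 0 1) :=
    (intervalIntegral.intervalIntegrable_rpow' hexp (a := 0) (b := 1)).1.const_mul _
  refine hmaj.mono' (by fun_prop) ((ae_restrict_iff' measurableSet_Ioc).2 (.of_forall ?_))
  rintro θ ⟨hθ, hθ1⟩
  rw [norm_mul, norm_pow, norm_of_nonneg (rpow_nonneg hθ.le s), norm_eq_abs, rpow_add hθ]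
  calc θ ^ s * |log θ| ^ n ≤ θ ^ s * ((δ ^ n)⁻¹ * θ ^ (-δ * n)) := by
        gcongr; exact abs_log_pow_le_of_le_one hθ hθ1 hδ n
    _ = (δ ^ n)⁻¹ * (θ ^ s * θ ^ (-δ * n)) := by ring

lemma integrableOn_rpow_mul_log_pow_Ioi {s : ℝ} (hs : s < -1) (n : ℕ) :
    IntegrableOn (fun θ ↦ θ ^ s * log θ ^ n) (Ioi 1) := by
  set δ := -(s + 1) / (2 * (n + 1)) with hδ_def
  have hδ : 0 < δ := div_pos (by linarith) (by positivity)
  have hexp : s + δ * n < -1 := by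
    have : δ * n ≤ -(s + 1) / 2 := by
      rw [hδ_def, div_mul_eq_mul_div, div_le_div_iff₀ (by positivity) two_pos]; nlinarith
    linarith
  have hmaj : IntegrableOn (fun θ ↦ (δ ^ n)⁻¹ * θ ^ (s + δ * n)) (Ioi 1) :=
    (integrableOn_Ioi_rpow_of_lt hexp one_pos).const_mul _
  refine hmaj.mono' (by fun_prop) ((ae_restrict_iff' measurableSet_Ioi).2 (.of_forall ?_))
  intro θ (hθ : 1 < θ)
  have hθ0 : 0 < θ := by linarith
  rw [norm_mul, norm_pow, norm_of_nonneg (rpow_nonneg hθ0.le s), norm_eq_abs, rpow_add hθ0]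
  calc θ ^ s * |log θ| ^ n ≤ θ ^ s * ((δ ^ n)⁻¹ * θ ^ (δ * n)) := by
        gcongr; exact abs_log_pow_le_of_one_le hθ.le hδ n
    _ = (δ ^ n)⁻¹ * (θ ^ s * θ ^ (δ * n)) := by ring

lemma sq_rpow_sub_rpow_le {θ x y z : ℝ} (hθ : 0 < θ) (hx : θ ^ x ≤ θ ^ z) (hy : θ ^ y ≤ θ ^ z) :
    (θ ^ x - θ ^ y) ^ 2 ≤ (x - y) ^ 2 * ((θ ^ z) ^ 2 * log θ ^ 2) := by
  calc (θ ^ x - θ ^ y) ^ 2 = |θ ^ x - θ ^ y| ^ 2 := (sq_abs _).symm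
    _ ≤ (θ ^ z * |log θ| * |x - y|) ^ 2 := by gcongr; exact abs_rpow_sub_rpow_le_s7 hθ hx hy
    _ = (x - y) ^ 2 * ((θ ^ z) ^ 2 * log θ ^ 2) := by rw [mul_pow, mul_pow, sq_abs, sq_abs]; ring

lemma sq_rpow_eq_rpow_two_mul {θ : ℝ} (hθ : 0 ≤ θ) (z : ℝ) : (θ ^ z) ^ 2 = θ ^ (2 * z) := by
  rw [mul_comm, ← rpow_mul_natCast hθ]; norm_num

lemma one_sub_cos_mul_sq_rpow_sub_le_of_le_one {θ t b γ H H' : ℝ} (hθ : 0 < θ) (hθ1 : θ ≤ 1)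
    (ht : |t| ≤ b) (hH : H ≤ γ) (hH' : H' ≤ γ) :
    (1 - cos (t * θ)) * (θ ^ (-H - 1/2) - θ ^ (-H' - 1/2)) ^ 2 ≤
      (H - H') ^ 2 * (b ^ 2 / 2 * (θ ^ (1 - 2 * γ) * log θ ^ 2)) := by
  have hcos : 1 - cos (t * θ) ≤ b ^ 2 / 2 * θ ^ 2 := by
    have htb : t ^ 2 ≤ b ^ 2 := sq_le_sq.2 (ht.trans (le_abs_self b))
    nlinarith [one_sub_sq_div_two_le_cos (x := t * θ), sq_nonneg θ]
  have hdiff := sq_rpow_sub_rpow_le hθ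
    (rpow_le_rpow_of_exponent_ge hθ hθ1 (by linarith : -γ - 1/2 ≤ -H - 1/2))
    (rpow_le_rpow_of_exponent_ge hθ hθ1 (by linarith : -γ - 1/2 ≤ -H' - 1/2))
  have hpow : θ ^ 2 * (θ ^ (-γ - 1/2)) ^ 2 = θ ^ (1 - 2 * γ) := by
    rw [sq_rpow_eq_rpow_two_mul hθ.le, ← rpow_two, ← rpow_add hθ]; ring_nf
  calc (1 - cos (t * θ)) * (θ ^ (-H - 1/2) - θ ^ (-H' - 1/2)) ^ 2
      ≤ (b ^ 2 / 2 * θ ^ 2) * ((-H - 1/2 - (-H' - 1/2)) ^ 2 *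
          ((θ ^ (-γ - 1/2)) ^ 2 * log θ ^ 2)) := by gcongr
    _ = (H - H') ^ 2 * (b ^ 2 / 2 * (θ ^ (1 - 2 * γ) * log θ ^ 2)) := by
        rw [← hpow]; ring

lemma one_sub_cos_mul_sq_rpow_sub_le_of_one_le {θ t α H H' : ℝ} (hθ : 1 ≤ θ)
    (hH : α ≤ H) (hH' : α ≤ H') :
    (1 - cos (t * θ)) * (θ ^ (-H - 1/2) - θ ^ (-H' - 1/2)) ^ 2 ≤
      (H - H') ^ 2 * (2 * (θ ^ (-2 * α - 1) * log θ ^ 2)) := by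
  have hθ0 : 0 < θ := by linarith
  have hcos : 1 - cos (t * θ) ≤ 2 := by linarith [neg_one_le_cos (t * θ)]
  have hdiff := sq_rpow_sub_rpow_le hθ0
    (rpow_le_rpow_of_exponent_le hθ (by linarith : -H - 1/2 ≤ -α - 1/2))
    (rpow_le_rpow_of_exponent_le hθ (by linarith : -H' - 1/2 ≤ -α - 1/2))
  have hpow : (θ ^ (-α - 1/2)) ^ 2 = θ ^ (-2 * α - 1) := by
    rw [sq_rpow_eq_rpow_two_mul hθ0.le]; ring_nf
  calc (1 - cos (t * θ)) * (θ ^ (-H - 1/2) - θ ^ (-H' - 1/2)) ^ 2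
      ≤ 2 * ((-H - 1/2 - (-H' - 1/2)) ^ 2 * ((θ ^ (-α - 1/2)) ^ 2 * log θ ^ 2)) := by
        gcongr
    _ = (H - H') ^ 2 * (2 * (θ ^ (-2 * α - 1) * log θ ^ 2)) := by rw [← hpow]; ring

noncomputable def fBmIncrementMajorant (α γ b θ : ℝ) : ℝ :=
  if θ ≤ 1 then b ^ 2 / 2 * (θ ^ (1 - 2 * γ) * log θ ^ 2) else 2 * (θ ^ (-2 * α - 1) * log θ ^ 2)

lemma fBmIncrementMajorant_nonneg (α γ b : ℝ) {θ : ℝ} (hθ : 0 ≤ θ) :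
    0 ≤ fBmIncrementMajorant α γ b θ := by
  unfold fBmIncrementMajorant; split_ifs <;> positivity

lemma integrableOn_fBmIncrementMajorant {α γ : ℝ} (hα : 0 < α) (hγ : γ < 1) (b : ℝ) :
    IntegrableOn (fBmIncrementMajorant α γ b) (Ioi 0) := by
  rw [← Ioc_union_Ioi_eq_Ioi zero_le_one]
  refine IntegrableOn.union ?_ ?_
  · refine IntegrableOn.congr_fun
      ((integrableOn_rpow_mul_log_pow_Ioc (s := 1 - 2 * γ) (by linarith) 2).const_mul (b ^ 2 / 2))
      (fun θ hθ ↦ ?_) measurableSet_Ioc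
    simp only [fBmIncrementMajorant, if_pos hθ.2]
  · refine IntegrableOn.congr_fun
      ((integrableOn_rpow_mul_log_pow_Ioi (s := -2 * α - 1) (by linarith) 2).const_mul 2)
      (fun θ hθ ↦ ?_) measurableSet_Ioi
    simp only [fBmIncrementMajorant, if_neg (not_le.2 (mem_Ioi.1 hθ))]

lemma one_sub_cos_mul_sq_rpow_sub_le_majorant {θ t b α γ H H' : ℝ} (hθ : 0 < θ)
    (hH : H ∈ Icc α γ) (hH' : H' ∈ Icc α γ) (ht : |t| ≤ b) :
    (1 - cos (t * θ)) * (θ ^ (-H - 1/2) - θ ^ (-H' - 1/2)) ^ 2 ≤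
      (H - H') ^ 2 * fBmIncrementMajorant α γ b θ := by
  unfold fBmIncrementMajorant
  split_ifs with hθ1
  · exact one_sub_cos_mul_sq_rpow_sub_le_of_le_one hθ hθ1 ht hH.2 hH'.2
  · exact one_sub_cos_mul_sq_rpow_sub_le_of_one_le (le_of_not_ge hθ1) hH.1 hH'.1

theorem fBm_regularity_in_H_general (α γ a b : ℝ) (hα : 0 < α) (hγ : γ < 1)
    (ha : 0 < a) :
    ∃ C : ℝ, 0 < C ∧ ∀ H H' : ℝ, H ∈ Set.Icc α γ → H' ∈ Set.Icc α γ →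
      ∀ t ∈ Set.Icc a b,
        (∫ θ in Set.Ioi (0:ℝ),
            (1 - Real.cos (t * θ)) * (θ ^ (-H - 1/2) - θ ^ (-H' - 1/2)) ^ 2) ≤
          C * |H - H'| ^ 2 := by
  set I := ∫ θ in Ioi (0:ℝ), fBmIncrementMajorant α γ b θ
  have hI : 0 ≤ I := setIntegral_nonneg measurableSet_Ioi
    fun θ hθ ↦ fBmIncrementMajorant_nonneg α γ b (le_of_lt hθ)
  refine ⟨I + 1, by linarith, fun H H' hH hH' t ht ↦ ?_⟩
  have ht' : |t| ≤ b := abs_le.2 ⟨by linarith [ht.1, ht.2], ht.2⟩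
  calc (∫ θ in Ioi (0:ℝ), (1 - cos (t * θ)) * (θ ^ (-H - 1/2) - θ ^ (-H' - 1/2)) ^ 2)
      ≤ ∫ θ in Ioi (0:ℝ), (H - H') ^ 2 * fBmIncrementMajorant α γ b θ := by
        refine integral_mono_of_nonneg (.of_forall fun θ ↦ ?_)
          ((integrableOn_fBmIncrementMajorant hα hγ b).const_mul _)
          ((ae_restrict_iff' measurableSet_Ioi).2 (.of_forall fun θ hθ ↦
            one_sub_cos_mul_sq_rpow_sub_le_majorant hθ hH hH' ht'))
        have := cos_le_one (t * θ)
        positivity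
    _ = (H - H') ^ 2 * I := integral_const_mul _ _
    _ ≤ (I + 1) * |H - H'| ^ 2 := by rw [sq_abs, mul_comm]; gcongr; linarith

theorem fBm_regularity_in_H (α γ a b : ℝ) (hα : 0 < α) (hαγ : α ≤ γ) (hγ : γ < 1)
    (ha : 0 < a) (hab : a ≤ b) :
    ∃ C : ℝ, 0 < C ∧ ∀ H H' : ℝ, H ∈ Set.Icc α γ → H' ∈ Set.Icc α γ →
      ∀ t ∈ Set.Icc a b,
        (∫ θ in Set.Ioi (0:ℝ),
            (1 - Real.cos (t * θ)) * (θ ^ (-H - 1/2) - θ ^ (-H' - 1/2)) ^ 2) ≤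
          C * |H - H'| ^ 2 :=
  fBm_regularity_in_H_general α γ a b hα hγ ha
end

section
/- Let 0 < α ≤ γ < 1, K ∈ (0,1], and [a,b] ⊂ (0,∞). Define, for H ∈ (0,1), φ(H,t) = ∫₀^∞ (e^{-θ t^{2H'}} - e^{-θ t^{2H}})² θ^{-(1+K)} dθ. Then there exists a finite constant C(α,γ,K) such that for all H,H' ∈ [α,γ] and all t ∈ [a,b], ∫₀^∞ (e^{-θ t^{2H'}} - e^{-θ t^{2H}})² θ^{-(1+K)} dθ ≤ C(α,γ,K)|H-H'|². -/
/-!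
Write `t ^ (2H) = exp (2H log t)`. On the compact parameter box the exponent stays in a fixed
interval `[-c, c]`, so `t ^ (2H) ≥ m := exp (-c) > 0` and `H ↦ t ^ (2H)` is Lipschitz. Since `exp`
is `exp c`-Lipschitz on `(-∞, c]`, for `x, y ≥ m` we get
`|exp (-θx) - exp (-θy)| ≤ θ exp (-θm) |x - y|`, so the integrand is at most
`|x - y|² θ ^ (1 - K) exp (-2mθ)`, whose integral is the finite Gamma integral
`Γ(2 - K) / (2m) ^ (2 - K)` as long as `K < 2`.
-/

open Real Set MeasureTheory

lemma abs_exp_sub_exp_le_of_le {u v c : ℝ} (hu : u ≤ c) (hv : v ≤ c) :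
    |exp u - exp v| ≤ exp c * |u - v| := by
  wlog hvu : v ≤ u generalizing u v
  · rw [abs_sub_comm, abs_sub_comm u]
    exact this hv hu (le_of_not_ge hvu)
  have hexp : exp v = exp u * exp (-(u - v)) := by rw [← exp_add]; ring_nf
  calc |exp u - exp v| = exp u * (1 - exp (-(u - v))) := by
        rw [abs_of_nonneg (by simpa using exp_le_exp.mpr hvu), hexp]; ring
    _ ≤ exp u * (u - v) :=
        mul_le_mul_of_nonneg_left (by linarith [one_sub_le_exp_neg (u - v)]) (exp_pos u).le
    _ ≤ exp c * |u - v| := by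
        rw [abs_of_nonneg (sub_nonneg.mpr hvu)]
        gcongr

section RpowInExponent

variable {t s s' R ℓ : ℝ}

lemma abs_log_mul_le (hℓ : |log t| ≤ ℓ) (hs : |s| ≤ R) : |log t * s| ≤ R * ℓ := by
  rw [abs_mul, mul_comm R]
  exact mul_le_mul hℓ hs (abs_nonneg _) ((abs_nonneg _).trans hℓ)

lemma exp_neg_mul_le_rpow (ht : 0 < t) (hℓ : |log t| ≤ ℓ) (hs : |s| ≤ R) :
    exp (-(R * ℓ)) ≤ t ^ s := by
  rw [rpow_def_of_pos ht]
  exact exp_le_exp.mpr (neg_le_of_abs_le (abs_log_mul_le hℓ hs))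

lemma abs_rpow_sub_rpow_le_s8 (ht : 0 < t) (hℓ : |log t| ≤ ℓ) (hs : |s| ≤ R) (hs' : |s'| ≤ R) :
    |t ^ s - t ^ s'| ≤ exp (R * ℓ) * ℓ * |s - s'| := by
  rw [rpow_def_of_pos ht, rpow_def_of_pos ht]
  calc |exp (log t * s) - exp (log t * s')|
      ≤ exp (R * ℓ) * |log t * s - log t * s'| :=
        abs_exp_sub_exp_le_of_le (le_of_abs_le (abs_log_mul_le hℓ hs))
          (le_of_abs_le (abs_log_mul_le hℓ hs'))
    _ ≤ exp (R * ℓ) * ℓ * |s - s'| := by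
        rw [← mul_sub, abs_mul, mul_assoc]
        gcongr

end RpowInExponent

section LaplaceDifference

variable {θ x y m K : ℝ}

lemma sq_exp_neg_mul_sub_le (hθ : 0 ≤ θ) (hx : m ≤ x) (hy : m ≤ y) :
    (exp (-(θ * x)) - exp (-(θ * y))) ^ 2 ≤ θ ^ 2 * exp (-(2 * m * θ)) * (x - y) ^ 2 := by
  have hbound : |exp (-(θ * x)) - exp (-(θ * y))| ≤ exp (-(θ * m)) * (θ * |x - y|) := by
    have key := abs_exp_sub_exp_le_of_le (c := -(θ * m))
      (neg_le_neg (mul_le_mul_of_nonneg_left hx hθ))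
      (neg_le_neg (mul_le_mul_of_nonneg_left hy hθ))
    rwa [show -(θ * x) - -(θ * y) = θ * -(x - y) by ring, abs_mul, abs_neg,
      abs_of_nonneg hθ] at key
  have hsq : exp (-(θ * m)) ^ 2 = exp (-(2 * m * θ)) := by rw [← exp_nat_mul]; ring_nf
  calc (exp (-(θ * x)) - exp (-(θ * y))) ^ 2
      ≤ (exp (-(θ * m)) * (θ * |x - y|)) ^ 2 := by
        rw [← sq_abs]; exact pow_le_pow_left₀ (abs_nonneg _) hbound 2
    _ = θ ^ 2 * exp (-(2 * m * θ)) * (x - y) ^ 2 := by rw [mul_pow, mul_pow, sq_abs, hsq]; ring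

lemma integral_sq_exp_neg_mul_sub_mul_rpow_le (hm : 0 < m) (hx : m ≤ x) (hy : m ≤ y)
    (hK : K < 2) :
    ∫ θ in Ioi (0 : ℝ), (exp (-(θ * x)) - exp (-(θ * y))) ^ 2 * θ ^ (-(1 + K)) ≤
      (1 / (2 * m)) ^ (2 - K) * Gamma (2 - K) * (x - y) ^ 2 := by
  have hgamma := integral_rpow_mul_exp_neg_mul_Ioi (a := 2 - K) (sub_pos.mpr hK)
    (mul_pos two_pos hm)
  have hint : IntegrableOn (fun θ : ℝ ↦ θ ^ (2 - K - 1) * exp (-(2 * m * θ))) (Ioi 0) :=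
    Integrable.of_integral_ne_zero <| by
      rw [hgamma]; exact (mul_pos (by positivity) (Gamma_pos_of_pos (sub_pos.mpr hK))).ne'
  calc ∫ θ in Ioi (0 : ℝ), (exp (-(θ * x)) - exp (-(θ * y))) ^ 2 * θ ^ (-(1 + K))
      ≤ ∫ θ in Ioi (0 : ℝ), θ ^ (2 - K - 1) * exp (-(2 * m * θ)) * (x - y) ^ 2 := by
        refine integral_mono_of_nonneg ?_ (hint.mul_const _) ?_ <;>
          filter_upwards [ae_restrict_mem measurableSet_Ioi] with θ (hθ : 0 < θ)
        · positivity
        have hpow : θ ^ (2 - K - 1) = θ ^ 2 * θ ^ (-(1 + K)) := by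
          rw [← rpow_natCast, ← rpow_add hθ]; norm_num; ring_nf
        calc (exp (-(θ * x)) - exp (-(θ * y))) ^ 2 * θ ^ (-(1 + K))
            ≤ θ ^ 2 * exp (-(2 * m * θ)) * (x - y) ^ 2 * θ ^ (-(1 + K)) := by
              gcongr; exact sq_exp_neg_mul_sub_le hθ.le hx hy
          _ = θ ^ (2 - K - 1) * exp (-(2 * m * θ)) * (x - y) ^ 2 := by rw [hpow]; ring
    _ = (1 / (2 * m)) ^ (2 - K) * Gamma (2 - K) * (x - y) ^ 2 := by
        rw [integral_mul_const, hgamma]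

end LaplaceDifference

theorem XHK_regularity_in_H_general (α γ K a b : ℝ)
    (hK : K ∈ Set.Ioc (0:ℝ) 1) (ha : 0 < a) :
    ∃ C : ℝ, 0 < C ∧ ∀ H H' : ℝ, H ∈ Set.Icc α γ → H' ∈ Set.Icc α γ →
      ∀ t ∈ Set.Icc a b,
        (∫ θ in Set.Ioi (0:ℝ),
            (Real.exp (-(θ * t ^ (2 * H'))) - Real.exp (-(θ * t ^ (2 * H)))) ^ 2 *
              θ ^ (-(1 + K))) ≤ C * |H - H'| ^ 2 := by
  set ℓ := max |log a| |log b|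
  set R := 2 * max |α| |γ|
  set m := exp (-(R * ℓ))
  set L := exp (R * ℓ) * ℓ
  set G := (1 / (2 * m)) ^ (2 - K) * Gamma (2 - K)
  have hG : 0 ≤ G := by have := Gamma_pos_of_pos (by linarith [hK.2] : 0 < 2 - K); positivity
  refine ⟨G * (2 * L) ^ 2 + 1, by positivity, fun H H' hH hH' t ht ↦ ?_⟩
  have ht0 : 0 < t := ha.trans_le ht.1
  have hlog : |log t| ≤ ℓ :=
    abs_le_max_abs_abs (log_le_log ha ht.1) (log_le_log ht0 ht.2)
  have hexponent : ∀ s ∈ Icc α γ, |2 * s| ≤ R := fun s hs ↦ by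
    rw [abs_mul, abs_two]
    exact mul_le_mul_of_nonneg_left (abs_le_max_abs_abs hs.1 hs.2) two_pos.le
  have hlip : |t ^ (2 * H') - t ^ (2 * H)| ≤ 2 * L * |H - H'| := by
    calc |t ^ (2 * H') - t ^ (2 * H)| ≤ L * |2 * H' - 2 * H| :=
          abs_rpow_sub_rpow_le_s8 ht0 hlog (hexponent H' hH') (hexponent H hH)
      _ = 2 * L * |H - H'| := by
          rw [← mul_sub, abs_mul, abs_two, abs_sub_comm]; ring
  calc _ ≤ G * (t ^ (2 * H') - t ^ (2 * H)) ^ 2 :=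
        integral_sq_exp_neg_mul_sub_mul_rpow_le (exp_pos _)
          (exp_neg_mul_le_rpow ht0 hlog (hexponent H' hH'))
          (exp_neg_mul_le_rpow ht0 hlog (hexponent H hH)) (by linarith [hK.2])
    _ ≤ G * (2 * L * |H - H'|) ^ 2 := by
        rw [← sq_abs]; gcongr
    _ ≤ (G * (2 * L) ^ 2 + 1) * |H - H'| ^ 2 := by
        nlinarith [sq_nonneg (H - H')]

theorem XHK_regularity_in_H (α γ K a b : ℝ) (hα : 0 < α) (hαγ : α ≤ γ) (hγ : γ < 1)
    (hK : K ∈ Set.Ioc (0:ℝ) 1) (ha : 0 < a) (hab : a ≤ b) :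
    ∃ C : ℝ, 0 < C ∧ ∀ H H' : ℝ, H ∈ Set.Icc α γ → H' ∈ Set.Icc α γ →
      ∀ t ∈ Set.Icc a b,
        (∫ θ in Set.Ioi (0:ℝ),
            (Real.exp (-(θ * t ^ (2 * H'))) - Real.exp (-(θ * t ^ (2 * H)))) ^ 2 *
              θ ^ (-(1 + K))) ≤ C * |H - H'| ^ 2 :=
  XHK_regularity_in_H_general α γ K a b hK ha
end

section
/- Let H ∈ (0,1), K ∈ (0,1), fix t > 0 and u ≥ 0 with u > 0. Then, with σ²_ρ = R^{H,K}(t+ρu, t+ρu) + R^{H,K}(t,t) − 2R^{H,K}(t+ρu, t), one has σ²_ρ / ρ^{2HK} → 2^{1−K} u^{2HK} as ρ → 0⁺. -/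
open Real Set Filter

/-!
For `s, t > 0` the increment variance splits as `g_t(s) + 2^(1-K) |s - t|^(2HK)`, where
`g_t(s) = s^(2HK) + t^(2HK) - 2^(1-K) (s^(2H) + t^(2H))^K` is smooth near `t` and `g_t(t) = 0`.
Concavity of `x ↦ x^K` gives `g_t ≤ 0`, so `t` is a local maximum of `g_t` and `g_t'(t) = 0`.
Hence `g_t(s) = O((s - t)^2)`, which is `o(|s - t|^(2HK))` because `2HK < 2`.
-/

open Topology Asymptotics

theorem ContDiffAt.isBigO_sub_sq {f : ℝ → ℝ} {x₀ : ℝ} (hf : ContDiffAt ℝ 2 f x₀)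
    (hf' : deriv f x₀ = 0) :
    (fun x => f x - f x₀) =O[𝓝 x₀] fun x => (x - x₀) ^ 2 := by
  have hderiv : ∀ᶠ x in 𝓝 x₀, HasDerivAt f (deriv f x) x :=
    (hf.eventually (by simp)).mono fun x hx => (hx.differentiableAt (by norm_num)).hasDerivAt
  have hderiv2 : HasDerivAt (deriv f) (deriv (deriv f) x₀) x₀ :=
    ((hf.derivWithin (m := 1) (by norm_num)).differentiableAt one_ne_zero).hasDerivAt
  have hcont : Tendsto (fun x => f x - f x₀) (𝓝[≠] x₀) (𝓝 0) := by
    simpa using (hf.continuousAt.tendsto.sub_const (f x₀)).mono_left nhdsWithin_le_nhds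
  have hsq : Tendsto (fun x => (x - x₀) ^ 2) (𝓝[≠] x₀) (𝓝 0) :=
    ((by fun_prop : Continuous fun x : ℝ => (x - x₀) ^ 2).tendsto' x₀ 0 (by simp)).mono_left
      nhdsWithin_le_nhds
  have hslope : Tendsto (fun x => deriv f x / (2 * (x - x₀))) (𝓝[≠] x₀)
      (𝓝 (deriv (deriv f) x₀ / 2)) := by
    refine ((hasDerivAt_iff_tendsto_slope.mp hderiv2).div_const 2).congr fun x => ?_
    rw [slope_def_field, hf', sub_zero, div_div, mul_comm]
  have hlim : Tendsto (fun x => (f x - f x₀) / (x - x₀) ^ 2) (𝓝[≠] x₀)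
      (𝓝 (deriv (deriv f) x₀ / 2)) := by
    refine HasDerivAt.lhopital_zero_nhdsNE (f' := deriv f) (g' := fun x => 2 * (x - x₀))
      ?_ ?_ ?_ hcont hsq hslope
    · exact (hderiv.filter_mono nhdsWithin_le_nhds).mono fun x hx => hx.sub_const _
    · refine Eventually.of_forall fun x => ?_
      simpa using ((hasDerivAt_id x).sub_const x₀).fun_pow 2
    · filter_upwards [self_mem_nhdsWithin] with x hx
      simpa [sub_eq_zero] using hx
  rw [← nhdsNE_sup_pure]
  refine (isBigO_of_div_tendsto_nhds ?_ _ hlim).sup (isBigO_pure.2 fun _ => by simp)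
  filter_upwards [self_mem_nhdsWithin] with x hx
  simp_all [sub_eq_zero]

theorem isLittleO_rpow_rpow_nhdsGT_zero {a b : ℝ} (hab : a < b) :
    (fun x : ℝ => x ^ b) =o[𝓝[>] 0] fun x => x ^ a := by
  have hlim : Tendsto (fun x : ℝ => x ^ (b - a)) (𝓝[>] 0) (𝓝 0) := by
    simpa [zero_rpow (sub_ne_zero.2 hab.ne')] using
      (continuousAt_rpow_const 0 (b - a) (Or.inr (sub_nonneg.2 hab.le))).tendsto.mono_left
        nhdsWithin_le_nhds
  refine (isLittleO_iff_tendsto' ?_).2 (hlim.congr' ?_)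
  all_goals filter_upwards [self_mem_nhdsWithin] with x (hx : 0 < x)
  · simp [(rpow_pos_of_pos hx a).ne']
  · rw [rpow_sub hx]

noncomputable def bfBmIncrementVar (H K s t : ℝ) : ℝ :=
  Rbf H K s s + Rbf H K t t - 2 * Rbf H K s t

noncomputable def bfBmSmoothPart (H K t s : ℝ) : ℝ :=
  s ^ (2 * H * K) + t ^ (2 * H * K) - 2 ^ (1 - K) * (s ^ (2 * H) + t ^ (2 * H)) ^ K

section

variable {H K s t : ℝ}

lemma two_rpow_one_sub_mul_two_rpow (K : ℝ) : (2 : ℝ) ^ (1 - K) * 2 ^ K = 2 := by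
  rw [← rpow_add two_pos, sub_add_cancel, rpow_one]

lemma add_self_rpow_rpow (p K : ℝ) (hs : 0 ≤ s) :
    (s ^ p + s ^ p) ^ K = 2 ^ K * s ^ (p * K) := by
  rw [← two_mul, mul_rpow zero_le_two (rpow_nonneg hs _), ← rpow_mul hs]

lemma Rbf_self_s13 (hHK : 2 * H * K ≠ 0) (hs : 0 ≤ s) : Rbf H K s s = s ^ (2 * H * K) := by
  rw [Rbf, add_self_rpow_rpow _ K hs, sub_self, abs_zero, zero_rpow hHK, sub_zero, ← mul_assoc,
    ← rpow_add two_pos, neg_add_cancel, rpow_zero, one_mul]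

lemma bfBmIncrementVar_eq (hHK : 2 * H * K ≠ 0) (hs : 0 ≤ s) (ht : 0 ≤ t) :
    bfBmIncrementVar H K s t = bfBmSmoothPart H K t s + 2 ^ (1 - K) * |s - t| ^ (2 * H * K) := by
  have h2 : 2 * (2 : ℝ) ^ (-K) = 2 ^ (1 - K) := by
    rw [rpow_neg zero_le_two, ← div_eq_mul_inv, rpow_sub two_pos, rpow_one]
  rw [bfBmIncrementVar, bfBmSmoothPart, Rbf_self_s13 hHK hs, Rbf_self_s13 hHK ht, Rbf, ← mul_assoc, h2]
  ring

lemma bfBmSmoothPart_self (H K : ℝ) (ht : 0 ≤ t) : bfBmSmoothPart H K t t = 0 := by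
  rw [bfBmSmoothPart, add_self_rpow_rpow _ K ht, ← mul_assoc, two_rpow_one_sub_mul_two_rpow]
  ring

lemma bfBmSmoothPart_nonpos (H : ℝ) (hK₀ : 0 ≤ K) (hK₁ : K ≤ 1) (hs : 0 ≤ s) (ht : 0 ≤ t) :
    bfBmSmoothPart H K t s ≤ 0 := by
  have hmid := (concaveOn_rpow hK₀ hK₁).2 (mem_Ici.2 (rpow_nonneg hs (2 * H)))
    (mem_Ici.2 (rpow_nonneg ht (2 * H))) (by norm_num : (0 : ℝ) ≤ 1 / 2)
    (by norm_num : (0 : ℝ) ≤ 1 / 2) (by norm_num)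
  simp only [smul_eq_mul, ← mul_add, ← rpow_mul hs, ← rpow_mul ht] at hmid
  rw [mul_rpow (by norm_num) (by positivity), one_div, inv_rpow zero_le_two] at hmid
  rw [bfBmSmoothPart, sub_nonpos, rpow_sub two_pos, rpow_one, div_eq_mul_inv]
  linarith

lemma contDiffAt_bfBmSmoothPart {n : WithTop ℕ∞} (H K : ℝ) (hs : 0 < s) (ht : 0 ≤ t) :
    ContDiffAt ℝ n (bfBmSmoothPart H K t) s := by
  have hbase : s ^ (2 * H) + t ^ (2 * H) ≠ 0 := by positivity
  have h1 : ContDiffAt ℝ n (fun s : ℝ => s ^ (2 * H)) s := contDiffAt_rpow_const_of_ne hs.ne'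
  have h2 : ContDiffAt ℝ n (fun s : ℝ => s ^ (2 * H * K)) s := contDiffAt_rpow_const_of_ne hs.ne'
  exact (h2.add contDiffAt_const).sub
    (contDiffAt_const.mul ((h1.add contDiffAt_const).rpow_const_of_ne hbase))

lemma deriv_bfBmSmoothPart_self (H : ℝ) (hK₀ : 0 ≤ K) (hK₁ : K ≤ 1) (ht : 0 < t) :
    deriv (bfBmSmoothPart H K t) t = 0 := by
  refine IsLocalMax.deriv_eq_zero ?_
  filter_upwards [lt_mem_nhds ht] with s hs
  rw [bfBmSmoothPart_self H K ht.le]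
  exact bfBmSmoothPart_nonpos H hK₀ hK₁ hs.le ht.le

lemma tendsto_bfBmSmoothPart_div_rpow (hHK : 2 * H * K < 2) (hK₀ : 0 ≤ K) (hK₁ : K ≤ 1)
    (ht : 0 < t) (u : ℝ) :
    Tendsto (fun ρ => bfBmSmoothPart H K t (t + ρ * u) / ρ ^ (2 * H * K)) (𝓝[>] 0) (𝓝 0) := by
  have hsq := (contDiffAt_bfBmSmoothPart H K ht ht.le).isBigO_sub_sq
    (deriv_bfBmSmoothPart_self H hK₀ hK₁ ht)
  have hshift : Tendsto (fun ρ : ℝ => t + ρ * u) (𝓝[>] 0) (𝓝 t) :=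
    ((by fun_prop : Continuous fun ρ : ℝ => t + ρ * u).tendsto' 0 t (by simp)).mono_left
      nhdsWithin_le_nhds
  have hquad := hsq.comp_tendsto hshift
  simp only [Function.comp_def, bfBmSmoothPart_self H K ht.le, sub_zero, add_sub_cancel_left,
    mul_pow, mul_comm _ (u ^ 2)] at hquad
  have hpow := isLittleO_rpow_rpow_nhdsGT_zero hHK
  simp only [rpow_two] at hpow
  exact ((hquad.trans (isBigO_const_mul_self _ _ _)).trans_isLittleO hpow).tendsto_div_nhds_zero

end

theorem bfBm_lass_variance (H K : ℝ) (hH : H ∈ Set.Ioo (0:ℝ) 1)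
    (hK : K ∈ Set.Ioo (0:ℝ) 1) (t u : ℝ) (ht : 0 < t) (hu : 0 < u) :
    Tendsto (fun ρ : ℝ =>
        (Rbf H K (t + ρ * u) (t + ρ * u) + Rbf H K t t - 2 * Rbf H K (t + ρ * u) t) /
          ρ ^ (2 * H * K))
      (nhdsWithin 0 (Set.Ioi 0)) (nhds (2 ^ (1 - K) * u ^ (2 * H * K))) := by
  obtain ⟨hH₀, hH₁⟩ := hH
  obtain ⟨hK₀, hK₁⟩ := hK
  have hHK₀ : 0 < 2 * H * K := by positivity
  have hHK₂ : 2 * H * K < 2 := by nlinarith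
  have hsmooth := (tendsto_bfBmSmoothPart_div_rpow hHK₂ hK₀.le hK₁.le ht u).add_const
    (2 ^ (1 - K) * u ^ (2 * H * K))
  rw [zero_add] at hsmooth
  refine hsmooth.congr' ?_
  filter_upwards [self_mem_nhdsWithin] with ρ (hρ : 0 < ρ)
  have hincr : |t + ρ * u - t| ^ (2 * H * K) = ρ ^ (2 * H * K) * u ^ (2 * H * K) := by
    rw [add_sub_cancel_left, abs_of_pos (by positivity), mul_rpow hρ.le hu.le]
  change _ = bfBmIncrementVar H K (t + ρ * u) t / _
  rw [bfBmIncrementVar_eq hHK₀.ne' (by positivity) ht.le, hincr]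
  field_simp
end

section
/- Fix H ∈ (0,1) and K ∈ (0,1], and fix a ∈ ℕ. Let r(n) := E[(B^{H,K}_{a+1}−B^{H,K}_a)(B^{H,K}_{a+n+1}−B^{H,K}_{a+n})] be the correlation of unit increments of the bifractional Brownian motion B^{H,K}. Then ∑_{n≥0} |r(n)| = +∞ when 2HK > 1 and ∑_{n≥0} |r(n)| < +∞ when 2HK < 1. -/
open Real Set

/-- Correlation of unit increments of the bifractional Brownian motion:
`r a n = E[(B_{a+1} - B_a)(B_{a+n+1} - B_{a+n})]`. -/
noncomputable def rbf (H K : ℝ) (a n : ℕ) : ℝ :=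
  Rbf H K (a + 1) (a + n + 1) - Rbf H K (a + 1) (a + n) -
    Rbf H K a (a + n + 1) + Rbf H K a (a + n)

/-- Quadrilateral inequality for convex functions on `[0, ∞)`. -/
lemma quad_ineq {f : ℝ → ℝ} (hf : ConvexOn ℝ (Set.Ici (0:ℝ)) f)
    {u v d : ℝ} (hu : 0 ≤ u) (huv : u ≤ v) (hd : 0 ≤ d) :
    f (u + d) + f v ≤ f (v + d) + f u := by
  rcases eq_or_lt_of_le (show u ≤ v + d by linarith) with h | h
  · have hd0 : d = 0 := by linarith
    have hv : v = u := by linarith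
    rw [hd0, hv, add_zero]
  · set T := v + d - u with hT
    have hT0 : 0 < T := by simp only [hT]; linarith
    have hl : 0 ≤ d / T := div_nonneg hd hT0.le
    have hm : 0 ≤ (v - u) / T := div_nonneg (by linarith) hT0.le
    have hsum : (v - u) / T + d / T = 1 := by
      field_simp
      rw [hT]; ring
    have hvd : (0:ℝ) ≤ v + d := by linarith
    have h1 := hf.2 (Set.mem_Ici.mpr hu) (Set.mem_Ici.mpr hvd) hm hl hsum
    have h2 := hf.2 (Set.mem_Ici.mpr hu) (Set.mem_Ici.mpr hvd) hl hm
      (by linarith)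
    have e1 : ((v - u) / T) • u + (d / T) • (v + d) = u + d := by
      simp only [smul_eq_mul]; field_simp; ring
    have e2 : (d / T) • u + ((v - u) / T) • (v + d) = v := by
      simp only [smul_eq_mul]; field_simp; ring
    rw [e1] at h1
    rw [e2] at h2
    simp only [smul_eq_mul] at h1 h2
    have h3 : ((v - u) / T + d / T) * (f u + f (v + d)) = f u + f (v + d) := by
      rw [hsum, one_mul]
    nlinarith [h1, h2, h3]

/-- Quadrilateral inequality for `x ↦ x ^ p`, concave case (`0 < p ≤ 1`). -/
lemma quad_rpow_concave {p : ℝ} (hp0 : 0 < p) (hp1 : p ≤ 1)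
    {u v d : ℝ} (hu : 0 ≤ u) (huv : u ≤ v) (hd : 0 ≤ d) :
    (v + d) ^ p + u ^ p ≤ (u + d) ^ p + v ^ p := by
  have hconc : ConcaveOn ℝ (Set.Ici (0:ℝ)) fun x : ℝ => x ^ p :=
    Real.concaveOn_rpow hp0.le hp1
  have hconv : ConvexOn ℝ (Set.Ici (0:ℝ)) fun x : ℝ => -(x ^ p) := hconc.neg
  have := quad_ineq hconv hu huv hd
  linarith

/-- Quadrilateral inequality for `x ↦ x ^ p`, convex case (`1 ≤ p`). -/
lemma quad_rpow_convex {p : ℝ} (hp : 1 ≤ p)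
    {u v d : ℝ} (hu : 0 ≤ u) (huv : u ≤ v) (hd : 0 ≤ d) :
    (u + d) ^ p + v ^ p ≤ (v + d) ^ p + u ^ p :=
  quad_ineq (convexOn_rpow hp) hu huv hd

/-- Auxiliary function `φ(s) = ((a+1)^{2H} + s^{2H})^K - (a^{2H} + s^{2H})^K`. -/
noncomputable def phiAux (H K : ℝ) (a : ℕ) (s : ℝ) : ℝ :=
  (((a : ℝ) + 1) ^ (2 * H) + s ^ (2 * H)) ^ K -
    ((a : ℝ) ^ (2 * H) + s ^ (2 * H)) ^ K

/-- Auxiliary function `ψ(x) = x^α - (x-1)^α`. -/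
noncomputable def psiAux (α x : ℝ) : ℝ := x ^ α - (x - 1) ^ α

section aux

variable {H K : ℝ} (hH : H ∈ Set.Ioo (0:ℝ) 1) (hK : K ∈ Set.Ioc (0:ℝ) 1) (a : ℕ)

include hH hK

lemma phiAux_nonneg {s : ℝ} (hs : 0 ≤ s) : 0 ≤ phiAux H K a s := by
  have h1 : (a : ℝ) ^ (2 * H) ≤ ((a : ℝ) + 1) ^ (2 * H) :=
    Real.rpow_le_rpow (Nat.cast_nonneg a) (by linarith) (by nlinarith [hH.1])
  have h2 : (0:ℝ) ≤ (a : ℝ) ^ (2 * H) + s ^ (2 * H) := by positivity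
  have := Real.rpow_le_rpow h2 (by linarith : (a : ℝ) ^ (2 * H) + s ^ (2 * H)
      ≤ ((a : ℝ) + 1) ^ (2 * H) + s ^ (2 * H)) hK.1.le
  unfold phiAux
  linarith

lemma phiAux_anti {x y : ℝ} (hx : 0 ≤ x) (hxy : x ≤ y) :
    phiAux H K a y ≤ phiAux H K a x := by
  have h2H : (0:ℝ) ≤ 2 * H := by nlinarith [hH.1]
  have hd : (0:ℝ) ≤ ((a : ℝ) + 1) ^ (2 * H) - (a : ℝ) ^ (2 * H) := by
    have : (a : ℝ) ^ (2 * H) ≤ ((a : ℝ) + 1) ^ (2 * H) :=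
      Real.rpow_le_rpow (Nat.cast_nonneg a) (by linarith) h2H
    linarith
  have hxy2 : x ^ (2 * H) ≤ y ^ (2 * H) := Real.rpow_le_rpow hx hxy h2H
  have hu : (0:ℝ) ≤ (a : ℝ) ^ (2 * H) + x ^ (2 * H) := by positivity
  have h := quad_rpow_concave hK.1 hK.2 hu
    (by linarith : (a : ℝ) ^ (2 * H) + x ^ (2 * H) ≤ (a : ℝ) ^ (2 * H) + y ^ (2 * H))
    hd
  have e1 : (a : ℝ) ^ (2 * H) + y ^ (2 * H) +
      (((a : ℝ) + 1) ^ (2 * H) - (a : ℝ) ^ (2 * H)) =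
      ((a : ℝ) + 1) ^ (2 * H) + y ^ (2 * H) := by ring
  have e2 : (a : ℝ) ^ (2 * H) + x ^ (2 * H) +
      (((a : ℝ) + 1) ^ (2 * H) - (a : ℝ) ^ (2 * H)) =
      ((a : ℝ) + 1) ^ (2 * H) + x ^ (2 * H) := by ring
  rw [e1, e2] at h
  unfold phiAux
  linarith

/-- Telescoping summability of the mixed second difference of the `g` part. -/
lemma gsum : Summable (fun n : ℕ =>
    phiAux H K a ((a : ℝ) + n + 1) - phiAux H K a ((a : ℝ) + n + 2)) := by
  apply summable_of_sum_range_le (c := phiAux H K a ((a : ℝ) + 0 + 1))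
  · intro n
    have := phiAux_anti hH hK a (by positivity : (0:ℝ) ≤ (a : ℝ) + n + 1)
      (by linarith : (a : ℝ) + n + 1 ≤ (a : ℝ) + n + 2)
    linarith
  · intro N
    have htel := Finset.sum_range_sub' (fun i : ℕ => phiAux H K a ((a : ℝ) + i + 1)) N
    have hcongr : ∑ i ∈ Finset.range N,
        (phiAux H K a ((a : ℝ) + i + 1) - phiAux H K a ((a : ℝ) + i + 2)) =
        ∑ i ∈ Finset.range N,
        (phiAux H K a ((a : ℝ) + i + 1) - phiAux H K a ((a : ℝ) + (i + 1 : ℕ) + 1)) := by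
      apply Finset.sum_congr rfl
      intro i _
      have : ((a : ℝ) + ((i + 1 : ℕ) : ℝ) + 1) = (a : ℝ) + i + 2 := by push_cast; ring
      rw [this]
    rw [hcongr, htel]
    simp only [Nat.cast_zero]
    have := phiAux_nonneg hH hK a (by positivity : (0:ℝ) ≤ (a : ℝ) + N + 1)
    linarith

end aux

lemma psiAux_nonneg {α x : ℝ} (hα : 0 < α) (hx : 1 ≤ x) : 0 ≤ psiAux α x := by
  have := Real.rpow_le_rpow (by linarith : (0:ℝ) ≤ x - 1) (by linarith : x - 1 ≤ x) hα.le
  unfold psiAux; linarith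

lemma psiAux_anti {α x y : ℝ} (hα0 : 0 < α) (hα1 : α ≤ 1) (hx : 1 ≤ x) (hxy : x ≤ y) :
    psiAux α y ≤ psiAux α x := by
  have h := quad_rpow_concave hα0 hα1 (by linarith : (0:ℝ) ≤ x - 1)
    (by linarith : x - 1 ≤ y - 1) (by norm_num : (0:ℝ) ≤ 1)
  have e1 : y - 1 + 1 = y := by ring
  have e2 : x - 1 + 1 = x := by ring
  rw [e1, e2] at h
  unfold psiAux
  linarith

lemma psiAux_mono {α x y : ℝ} (hα1 : 1 ≤ α) (hx : 1 ≤ x) (hxy : x ≤ y) :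
    psiAux α x ≤ psiAux α y := by
  have h := quad_rpow_convex hα1 (by linarith : (0:ℝ) ≤ x - 1)
    (by linarith : x - 1 ≤ y - 1) (by norm_num : (0:ℝ) ≤ 1)
  have e1 : y - 1 + 1 = y := by ring
  have e2 : x - 1 + 1 = x := by ring
  rw [e1, e2] at h
  unfold psiAux
  linarith

/-- Key decomposition of the increment correlation for indices `n + 1 ≥ 1`. -/
lemma rbf_decomp (H K : ℝ) (a n : ℕ) :
    (2:ℝ) ^ K * rbf H K a (n + 1) =
      (phiAux H K a ((a : ℝ) + n + 2) - phiAux H K a ((a : ℝ) + n + 1)) +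
      (psiAux (2 * H * K) ((n : ℝ) + 2) - psiAux (2 * H * K) ((n : ℝ) + 1)) := by
  have h2 : (2:ℝ) ^ K * (2:ℝ) ^ (-K) = 1 := by
    rw [← Real.rpow_add two_pos]; simp
  have key : ∀ X1 X2 X3 X4 : ℝ,
      (2:ℝ) ^ (-K) * X1 - (2:ℝ) ^ (-K) * X2 - (2:ℝ) ^ (-K) * X3 + (2:ℝ) ^ (-K) * X4
        = (2:ℝ) ^ (-K) * (X1 - X2 - X3 + X4) := by
    intro X1 X2 X3 X4; ring
  unfold rbf Rbf
  rw [show ((a : ℝ) + ((n + 1 : ℕ) : ℝ) + 1) = (a : ℝ) + (n : ℝ) + 2 by push_cast; ring]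
  rw [show ((a : ℝ) + ((n + 1 : ℕ) : ℝ)) = (a : ℝ) + (n : ℝ) + 1 by push_cast; ring]
  rw [show ((a : ℝ) + 1 - ((a : ℝ) + (n : ℝ) + 2)) = -((n : ℝ) + 1) by ring]
  rw [show ((a : ℝ) + 1 - ((a : ℝ) + (n : ℝ) + 1)) = -(n : ℝ) by ring]
  rw [show ((a : ℝ) - ((a : ℝ) + (n : ℝ) + 2)) = -((n : ℝ) + 2) by ring]
  rw [show ((a : ℝ) - ((a : ℝ) + (n : ℝ) + 1)) = -((n : ℝ) + 1) by ring]
  simp only [abs_neg]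
  rw [abs_of_nonneg (by positivity : (0:ℝ) ≤ (n : ℝ) + 1),
    abs_of_nonneg (Nat.cast_nonneg n),
    abs_of_nonneg (by positivity : (0:ℝ) ≤ (n : ℝ) + 2)]
  rw [key, ← mul_assoc, h2, one_mul]
  unfold phiAux psiAux
  rw [show ((n : ℝ) + 2 - 1) = (n : ℝ) + 1 by ring,
    show ((n : ℝ) + 1 - 1) = (n : ℝ) by ring]
  ring

/-- Bernoulli-type lower bound: `α x^{α-1} ≤ (x+1)^α - x^α` for `α ≥ 1`, `x ≥ 1`. -/
lemma bern {α : ℝ} (hα : 1 ≤ α) {x : ℝ} (hx : 1 ≤ x) :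
    α * x ^ (α - 1) ≤ (x + 1) ^ α - x ^ α := by
  have hx0 : (0:ℝ) < x := by linarith
  have e1 : x + 1 = x * (1 + 1 / x) := by field_simp
  have hinv : (0:ℝ) ≤ 1 / x := by positivity
  have h2 : (1:ℝ) + α * (1 / x) ≤ (1 + 1 / x) ^ α :=
    one_add_mul_self_le_rpow_one_add (by linarith) hα
  have h3 : (x + 1) ^ α = x ^ α * (1 + 1 / x) ^ α := by
    rw [e1, Real.mul_rpow hx0.le (by positivity)]
  have h4 : x ^ (α - 1) = x ^ α / x := by
    rw [Real.rpow_sub hx0, Real.rpow_one]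
  have hxa : (0:ℝ) ≤ x ^ α := Real.rpow_nonneg hx0.le α
  have h5 := mul_le_mul_of_nonneg_left h2 hxa
  have e2 : x ^ α * (1 + α * (1 / x)) = x ^ α + α * (x ^ α / x) := by
    field_simp
  rw [e2] at h5
  rw [h3, h4]
  linarith

theorem bfBm_long_range_dependence (H K : ℝ) (hH : H ∈ Set.Ioo (0:ℝ) 1)
    (hK : K ∈ Set.Ioc (0:ℝ) 1) (a : ℕ) :
    (2 * H * K > 1 → ¬ Summable (fun n : ℕ => |rbf H K a n|)) ∧
    (2 * H * K < 1 → Summable (fun n : ℕ => |rbf H K a n|)) := by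
  obtain ⟨hH0, hH1⟩ := hH
  obtain ⟨hK0, hK1⟩ := hK
  have hα0 : 0 < 2 * H * K := by positivity
  have hG : Summable (fun n : ℕ =>
      phiAux H K a ((a : ℝ) + n + 1) - phiAux H K a ((a : ℝ) + n + 2)) :=
    gsum ⟨hH0, hH1⟩ ⟨hK0, hK1⟩ a
  have h2K : (0:ℝ) < (2:ℝ) ^ K := Real.rpow_pos_of_pos two_pos K
  constructor
  · -- divergence when 2HK > 1
    intro hgt hs
    have hα1 : (1:ℝ) ≤ 2 * H * K := hgt.le
    have hs1 : Summable (fun n : ℕ => rbf H K a (n + 1)) :=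
      (summable_nat_add_iff 1).mpr (summable_abs_iff.mp hs)
    have hD : Summable (fun n : ℕ =>
        psiAux (2 * H * K) ((n : ℝ) + 2) - psiAux (2 * H * K) ((n : ℝ) + 1)) := by
      have heq : (fun n : ℕ =>
          psiAux (2 * H * K) ((n : ℝ) + 2) - psiAux (2 * H * K) ((n : ℝ) + 1)) =
          fun n : ℕ => (2:ℝ) ^ K * rbf H K a (n + 1) +
            (phiAux H K a ((a : ℝ) + n + 1) - phiAux H K a ((a : ℝ) + n + 2)) := by
        funext n
        have := rbf_decomp H K a n
        linarith
      rw [heq]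
      exact (hs1.mul_left _).add hG
    have hDnn : ∀ n : ℕ, 0 ≤ psiAux (2 * H * K) ((n : ℝ) + 2) -
        psiAux (2 * H * K) ((n : ℝ) + 1) := by
      intro n
      have := psiAux_mono hα1 (by have hn : (0:ℝ) ≤ (n:ℝ) := Nat.cast_nonneg n; linarith)
        (by linarith : (n : ℝ) + 1 ≤ (n : ℝ) + 2)
      linarith
    set C := ∑' n : ℕ, (psiAux (2 * H * K) ((n : ℝ) + 2) -
      psiAux (2 * H * K) ((n : ℝ) + 1)) with hC
    have hbound : ∀ N : ℕ, psiAux (2 * H * K) ((N : ℝ) + 1) -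
        psiAux (2 * H * K) 1 ≤ C := by
      intro N
      have htel := Finset.sum_range_sub (fun i : ℕ => psiAux (2 * H * K) ((i : ℝ) + 1)) N
      have hcongr : ∑ i ∈ Finset.range N,
          (psiAux (2 * H * K) ((i : ℝ) + 2) - psiAux (2 * H * K) ((i : ℝ) + 1)) =
          ∑ i ∈ Finset.range N,
          (psiAux (2 * H * K) (((i + 1 : ℕ) : ℝ) + 1) - psiAux (2 * H * K) ((i : ℝ) + 1)) := by
        apply Finset.sum_congr rfl
        intro i _
        have : (((i + 1 : ℕ) : ℝ) + 1) = (i : ℝ) + 2 := by push_cast; ring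
        rw [this]
      have hsle := Summable.sum_le_tsum (Finset.range N) (fun i _ => hDnn i) hD
      rw [hcongr, htel] at hsle
      simpa using hsle
    have htend : Filter.Tendsto (fun N : ℕ => 2 * H * K * (N : ℝ) ^ (2 * H * K - 1))
        Filter.atTop Filter.atTop := by
      apply Filter.Tendsto.const_mul_atTop hα0
      exact (tendsto_rpow_atTop (by linarith)).comp tendsto_natCast_atTop_atTop
    obtain ⟨N, hN1, hN2⟩ :=
      ((htend.eventually_gt_atTop (C + psiAux (2 * H * K) 1)).and
        (Filter.eventually_ge_atTop 1)).exists
    have hb := bern hα1 (show (1:ℝ) ≤ (N : ℝ) by exact_mod_cast hN2)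
    have hpsiN : psiAux (2 * H * K) ((N : ℝ) + 1) = ((N : ℝ) + 1) ^ (2 * H * K) -
        (N : ℝ) ^ (2 * H * K) := by
      unfold psiAux; norm_num
    have := hbound N
    rw [hpsiN] at this
    linarith
  · -- summability when 2HK < 1
    intro hlt
    have hα1 : 2 * H * K ≤ 1 := hlt.le
    have hDnn : ∀ n : ℕ, 0 ≤ psiAux (2 * H * K) ((n : ℝ) + 1) -
        psiAux (2 * H * K) ((n : ℝ) + 2) := by
      intro n
      have := psiAux_anti hα0 hα1 (by have hn : (0:ℝ) ≤ (n:ℝ) := Nat.cast_nonneg n; linarith)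
        (by linarith : (n : ℝ) + 1 ≤ (n : ℝ) + 2)
      linarith
    have hDsum : Summable (fun n : ℕ =>
        psiAux (2 * H * K) ((n : ℝ) + 1) - psiAux (2 * H * K) ((n : ℝ) + 2)) := by
      apply summable_of_sum_range_le (c := psiAux (2 * H * K) ((0:ℝ) + 1)) hDnn
      intro N
      have htel := Finset.sum_range_sub' (fun i : ℕ => psiAux (2 * H * K) ((i : ℝ) + 1)) N
      have hcongr : ∑ i ∈ Finset.range N,
          (psiAux (2 * H * K) ((i : ℝ) + 1) - psiAux (2 * H * K) ((i : ℝ) + 2)) =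
          ∑ i ∈ Finset.range N,
          (psiAux (2 * H * K) ((i : ℝ) + 1) - psiAux (2 * H * K) (((i + 1 : ℕ) : ℝ) + 1)) := by
        apply Finset.sum_congr rfl
        intro i _
        have : (((i + 1 : ℕ) : ℝ) + 1) = (i : ℝ) + 2 := by push_cast; ring
        rw [this]
      rw [hcongr, htel]
      simp only [Nat.cast_zero]
      have hpsi : 0 ≤ psiAux (2 * H * K) ((N : ℝ) + 1) :=
        psiAux_nonneg hα0 (by have hn : (0:ℝ) ≤ (N:ℝ) := Nat.cast_nonneg N; linarith)
      linarith
    rw [← summable_nat_add_iff 1]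
    refine Summable.of_nonneg_of_le (fun n => abs_nonneg _) (fun n => ?_)
      (((hG.add hDsum).mul_left ((2:ℝ) ^ (-K))) :
        Summable (fun n : ℕ => (2:ℝ) ^ (-K) *
        ((phiAux H K a ((a : ℝ) + n + 1) - phiAux H K a ((a : ℝ) + n + 2)) +
          (psiAux (2 * H * K) ((n : ℝ) + 1) - psiAux (2 * H * K) ((n : ℝ) + 2)))))
    · 
      have hd := rbf_decomp H K a n
      have hA : 0 ≤ phiAux H K a ((a : ℝ) + n + 1) - phiAux H K a ((a : ℝ) + n + 2) := by
        have := phiAux_anti ⟨hH0, hH1⟩ ⟨hK0, hK1⟩ a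
          (by positivity : (0:ℝ) ≤ (a : ℝ) + n + 1)
          (by linarith : (a : ℝ) + n + 1 ≤ (a : ℝ) + n + 2)
        linarith
      have hB := hDnn n
      have habs : (2:ℝ) ^ K * |rbf H K a (n + 1)| =
          (phiAux H K a ((a : ℝ) + n + 1) - phiAux H K a ((a : ℝ) + n + 2)) +
          (psiAux (2 * H * K) ((n : ℝ) + 1) - psiAux (2 * H * K) ((n : ℝ) + 2)) := by
        rw [show (2:ℝ) ^ K = |(2:ℝ) ^ K| from (abs_of_pos h2K).symm, ← abs_mul, hd]
        rw [show (phiAux H K a ((a : ℝ) + n + 2) - phiAux H K a ((a : ℝ) + n + 1)) +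
            (psiAux (2 * H * K) ((n : ℝ) + 2) - psiAux (2 * H * K) ((n : ℝ) + 1)) =
            -((phiAux H K a ((a : ℝ) + n + 1) - phiAux H K a ((a : ℝ) + n + 2)) +
              (psiAux (2 * H * K) ((n : ℝ) + 1) - psiAux (2 * H * K) ((n : ℝ) + 2))) by ring]
        rw [abs_neg, abs_of_nonneg (by linarith)]
      have h2Kinv : (2:ℝ) ^ (-K) = ((2:ℝ) ^ K)⁻¹ := by
        rw [Real.rpow_neg (by norm_num : (0:ℝ) ≤ 2)]
      rw [h2Kinv, ← habs, ← mul_assoc, inv_mul_cancel₀ h2K.ne', one_mul]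
end
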